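/- arXiv:2010.04540 — 12 statements merged into one kernel-verified Lean document; each statement's English description precedes it below -/
import Mathlib

section
/- Let X be a Banach space, let C ⊆ X be a convex set, let a ∈ X and r ≥ 0 with C ∩ B(a,r) ≠ ∅. Then for every s > 0 and every L > 1, one has (C + s·B) ∩ (B(a, Lr) + s·B) ⊆ C ∩ B(a, Lr) + θ(L)·s·B, where θ(L) = (3L+1)/(L−1) and B denotes the closed unit ball of X. -/
/-!
A point `x` of the left-hand side lies within `s` of some `c ∈ C`, and then `‖c - a‖ ≤ Lr + 2s`.
Pulling `c` toward a point `c₀ ∈ C ∩ B(a,r)` by the fraction `t = 2s / ((L-1)r + 2s)` of the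
segment lands in `C ∩ B(a, Lr)` by convexity of `C` and of the norm, and moves it by at most
`t ‖c - c₀‖ ≤ t ((L+1)r + 2s) ≤ 2(L+1)s/(L-1)`; adding the initial `s` gives `θ(L) s`.
-/

open Pointwise Metric

theorem Set.mem_add_closedBall_zero_iff {E : Type*} [SeminormedAddCommGroup E] {s : Set E}
    {δ : ℝ} {x : E} : x ∈ s + closedBall (0 : E) δ ↔ ∃ y ∈ s, dist x y ≤ δ := by
  simp only [Set.mem_add, mem_closedBall_zero_iff, dist_eq_norm]
  constructor
  · rintro ⟨y, hy, v, hv, rfl⟩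
    exact ⟨y, hy, by simpa using hv⟩
  · rintro ⟨y, hy, h⟩
    exact ⟨y, hy, x - y, h, by abel⟩

theorem Convex.exists_mem_inter_closedBall_dist_le {E : Type*} [NormedAddCommGroup E]
    [NormedSpace ℝ E] {C : Set E} (hC : Convex ℝ C) {a c c₀ : E} {r ρ R : ℝ}
    (hc : c ∈ C) (hc₀ : c₀ ∈ C) (hca : dist c a ≤ R) (hc₀a : dist c₀ a ≤ r)
    (hrρ : r ≤ ρ) (hρR : ρ ≤ R) (hrR : r < R) :
    ∃ y ∈ C ∩ closedBall a ρ, dist c y ≤ (R - ρ) / (R - r) * dist c c₀ := by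
  set t := (R - ρ) / (R - r)
  have hRr : 0 < R - r := sub_pos.2 hrR
  have ht₀ : 0 ≤ t := div_nonneg (sub_nonneg.2 hρR) hRr.le
  have ht₁ : t ≤ 1 := (div_le_one hRr).2 (by linarith)
  have hρ : (1 - t) * R + t * r = ρ := by
    simp only [t]; field_simp; ring
  refine ⟨AffineMap.lineMap c c₀ t, ⟨hC.lineMap_mem hc hc₀ ⟨ht₀, ht₁⟩, ?_⟩, ?_⟩
  · rw [mem_closedBall, AffineMap.lineMap_apply_module, ← hρ]
    calc dist ((1 - t) • c + t • c₀) a ≤ (1 - t) * dist c a + t * dist c₀ a :=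
          (convexOn_dist a convex_univ).2 trivial trivial (sub_nonneg.2 ht₁) ht₀ (by ring)
      _ ≤ (1 - t) * R + t * r := by gcongr
  · rw [dist_left_lineMap, Real.norm_of_nonneg ht₀]

theorem add_two_mul_div_mul_le_theta_mul {r s L : ℝ} (hr : 0 ≤ r) (hs : 0 < s) (hL : 1 < L) :
    s + 2 * s / ((L - 1) * r + 2 * s) * ((L + 1) * r + 2 * s) ≤ (3 * L + 1) / (L - 1) * s := by
  have hd : 0 < (L - 1) * r + 2 * s := by nlinarith
  have hL1 : 0 < L - 1 := by linarith
  rw [div_mul_eq_mul_div, div_mul_eq_mul_div, ← sub_nonneg]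
  field_simp
  nlinarith [mul_nonneg hs.le hr, mul_pos hs hs]

theorem stmt_0_general {X : Type*} [NormedAddCommGroup X] [NormedSpace ℝ X]
    (C : Set X) (hC : Convex ℝ C) (a : X) (r : ℝ) (hr : 0 ≤ r)
    (hne : (C ∩ Metric.closedBall a r).Nonempty)
    (s L : ℝ) (hs : 0 < s) (hL : 1 < L) :
    (C + Metric.closedBall (0 : X) s) ∩
        (Metric.closedBall a (L * r) + Metric.closedBall (0 : X) s) ⊆
      (C ∩ Metric.closedBall a (L * r)) +
        Metric.closedBall (0 : X) ((3 * L + 1) / (L - 1) * s) := by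
  obtain ⟨c₀, hc₀, hc₀a⟩ := hne
  rintro x ⟨hxC, hxB⟩
  obtain ⟨c, hc, hxc⟩ := Set.mem_add_closedBall_zero_iff.1 hxC
  obtain ⟨p, hp, hxp⟩ := Set.mem_add_closedBall_zero_iff.1 hxB
  have hca : dist c a ≤ L * r + 2 * s := by
    linarith [dist_triangle4 c x p a, dist_comm x c, mem_closedBall.1 hp]
  obtain ⟨y, hy, hcy⟩ := hC.exists_mem_inter_closedBall_dist_le (ρ := L * r) hc hc₀ hca hc₀a
    (by nlinarith) (by linarith) (by nlinarith)
  have hcc₀ : dist c c₀ ≤ (L + 1) * r + 2 * s := by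
    linarith [dist_triangle_right c c₀ a, mem_closedBall.1 hc₀a]
  have ht : (L * r + 2 * s - L * r) / (L * r + 2 * s - r) = 2 * s / ((L - 1) * r + 2 * s) := by
    ring_nf
  refine Set.mem_add_closedBall_zero_iff.2 ⟨y, hy, ?_⟩
  calc dist x y ≤ dist x c + dist c y := dist_triangle x c y
    _ ≤ s + 2 * s / ((L - 1) * r + 2 * s) * ((L + 1) * r + 2 * s) := by
        rw [ht] at hcy
        gcongr
        exact hcy.trans (by gcongr)
    _ ≤ (3 * L + 1) / (L - 1) * s := add_two_mul_div_mul_le_theta_mul hr hs hL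

/-- **Neighborhood of an intersection with a ball** (Proposition 2.3 of the paper, general
Banach case). If `C` is convex, `r ≥ 0` and `C ∩ B(a,r) ≠ ∅`, then for all `s > 0`, `L > 1`,
`(C + s·B) ∩ (B(a,Lr) + s·B) ⊆ C ∩ B(a,Lr) + θ(L)·s·B` with `θ(L) = (3L+1)/(L-1)`. -/
theorem stmt_0 {X : Type*} [NormedAddCommGroup X] [NormedSpace ℝ X] [CompleteSpace X]
    (C : Set X) (hC : Convex ℝ C) (a : X) (r : ℝ) (hr : 0 ≤ r)
    (hne : (C ∩ Metric.closedBall a r).Nonempty)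
    (s L : ℝ) (hs : 0 < s) (hL : 1 < L) :
    (C + Metric.closedBall (0 : X) s) ∩
        (Metric.closedBall a (L * r) + Metric.closedBall (0 : X) s) ⊆
      (C ∩ Metric.closedBall a (L * r)) +
        Metric.closedBall (0 : X) ((3 * L + 1) / (L - 1) * s) :=
  stmt_0_general C hC a r hr hne s L hs hL
end

section
/- Let a, b ∈ ℝ² with a,b in the rectangular hull of a convex closed set A ⊆ ℝ² (distances measured in the sup norm ℓ²_∞). Then the metric projections satisfy ‖Pr(a;A) − Pr(b;A)‖ ≤ 2‖a − b‖. -/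
/-- A closed interval of `ℝ` (possibly unbounded): a closed order-connected set. -/
def IsClosedInterval (I : Set ℝ) : Prop := IsClosed I ∧ I.OrdConnected

/-- The rectangular hull of a set `A ⊆ ℝ²`: the intersection of all closed axis-parallel
rectangles containing `A`. Here `ℝ²` carries the sup norm (the `Pi` norm on `Fin 2 → ℝ`). -/
def rectHull (A : Set (Fin 2 → ℝ)) : Set (Fin 2 → ℝ) :=
  ⋂₀ {R : Set (Fin 2 → ℝ) |
      (∃ I₁ I₂ : Set ℝ, IsClosedInterval I₁ ∧ IsClosedInterval I₂ ∧
        R = {x | x 0 ∈ I₁ ∧ x 1 ∈ I₂}) ∧ A ⊆ R}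

/-! In the sup norm, a nearest point `q ∈ A` to a point `x` of the rectangular hull sits at a
corner of the square of radius `d = infDist x A` around `x`: were one coordinate of `x - q`
shorter than `d`, moving `q` slightly towards a point of `A` whose other coordinate is within `d`
of `x` would bring it strictly closer. By convexity, no point of `A` other than `q` then lies in
the quadrant at `q` that points back towards `x`.

For a coordinate `i`, with `r, s` the distances of `a, b` to `A`, we have
`pa i - pb i ≤ (a i - b i) ± r ∓ s`, and `|r - s| ≤ ‖a - b‖` settles every sign pattern except
`pa i = a i + r`, `pb i = b i - s`. There the quadrant property at `pa` and at `pb` forces the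
other coordinate `j` to carry `pa` and `pb` to opposite sides, whence
`r + s < |a j - b j| ≤ ‖a - b‖` and `pa i - pb i ≤ ‖a - b‖ + r + s < 2 ‖a - b‖`. -/

open Metric Filter Topology

theorem apply_mem_of_mem_rectHull {A : Set (Fin 2 → ℝ)} {x : Fin 2 → ℝ} (hx : x ∈ rectHull A)
    {i : Fin 2} {S : Set ℝ} (hS : IsClosedInterval S) (hAS : ∀ z ∈ A, z i ∈ S) : x i ∈ S := by
  have huniv : IsClosedInterval Set.univ := ⟨isClosed_univ, Set.ordConnected_univ⟩
  fin_cases i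
  · exact (hx _ ⟨⟨S, _, hS, huniv, rfl⟩, fun z hz => ⟨hAS z hz, trivial⟩⟩).1
  · exact (hx _ ⟨⟨_, S, huniv, hS, rfl⟩, fun z hz => ⟨trivial, hAS z hz⟩⟩).2

theorem mem_closure_image_of_mem_rectHull {A : Set (Fin 2 → ℝ)} (hA : Convex ℝ A)
    {x : Fin 2 → ℝ} (hx : x ∈ rectHull A) (i : Fin 2) :
    x i ∈ closure ((fun z => z i) '' A) := by
  have hconv : Convex ℝ ((fun z : Fin 2 → ℝ => z i) '' A) :=
    hA.linear_image (LinearMap.proj i)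
  refine apply_mem_of_mem_rectHull hx
    ⟨isClosed_closure, convex_iff_ordConnected.1 hconv.closure⟩ fun z hz => ?_
  exact subset_closure ⟨z, hz, rfl⟩

theorem Convex.infDist_lt_of_forall_abs_lt {ι : Type*} [Fintype ι] {A : Set (ι → ℝ)}
    (hA : Convex ℝ A) {x q z : ι → ℝ} (hq : q ∈ A) (hz : z ∈ A) {d : ℝ} (hd : 0 < d)
    (hqd : ∀ m, |x m - q m| ≤ d) (h : ∀ m, |x m - q m| < d ∨ |x m - z m| < d) :
    infDist x A < d := by
  set y : ℝ → ι → ℝ := fun μ => (1 - μ) • q + μ • z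
  have hy : ∀ μ m, x m - y μ m = (1 - μ) * (x m - q m) + μ * (x m - z m) := by
    intro μ m
    simp only [y, Pi.add_apply, Pi.smul_apply, smul_eq_mul]
    ring
  have hcoord : ∀ m, ∀ᶠ μ in 𝓝[>] 0, |x m - y μ m| < d := by
    intro m
    rcases h m with hqm | hzm
    · have hcont : Continuous fun μ => |x m - y μ m| := by
        simp only [hy]
        fun_prop
      refine ((hcont.tendsto 0).mono_left nhdsWithin_le_nhds).eventually_lt_const ?_
      simpa [hy] using hqm
    · filter_upwards [Ioo_mem_nhdsGT one_pos] with μ ⟨hμ0, hμ1⟩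
      calc |x m - y μ m| ≤ (1 - μ) * |x m - q m| + μ * |x m - z m| := by
            rw [hy]
            refine (abs_add_le _ _).trans_eq ?_
            rw [abs_mul, abs_mul, abs_of_pos (sub_pos.2 hμ1), abs_of_pos hμ0]
        _ < d := by nlinarith [hqd m]
  obtain ⟨μ, hμ, hμ0, hμ1⟩ :=
    ((eventually_all.2 hcoord).and (Ioo_mem_nhdsGT one_pos)).exists
  calc infDist x A ≤ dist x (y μ) :=
        infDist_le_dist_of_mem (hA hq hz (sub_nonneg.2 hμ1.le) hμ0.le (sub_add_cancel 1 μ))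
    _ < d := (dist_pi_lt_iff hd).2 fun m => by rw [Real.dist_eq]; exact hμ m

theorem abs_sub_eq_infDist_of_mem_rectHull {A : Set (Fin 2 → ℝ)} (hA : Convex ℝ A)
    {x q : Fin 2 → ℝ} (hx : x ∈ rectHull A) (hq : q ∈ A) (hxq : dist x q = infDist x A)
    (k : Fin 2) : |x k - q k| = infDist x A := by
  have hle : ∀ m, |x m - q m| ≤ infDist x A := fun m => by
    rw [← Real.dist_eq, ← hxq]
    exact dist_le_pi_dist x q m
  refine (hle k).antisymm (not_lt.1 fun hk => ?_)
  have hd : 0 < infDist x A := (abs_nonneg _).trans_lt hk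
  obtain ⟨j, hjk⟩ := exists_ne k
  obtain ⟨_, ⟨z, hz, rfl⟩, hzj⟩ :=
    mem_closure_iff.1 (mem_closure_image_of_mem_rectHull hA hx j) _ hd
  refine (hA.infDist_lt_of_forall_abs_lt hq hz hd hle fun m => ?_).false
  by_cases hmk : m = k
  · exact .inl (hmk ▸ hk)
  · obtain rfl : m = j := by omega
    exact .inr hzj

theorem abs_add_of_mul_nonpos {u w : ℝ} (h : u * w ≤ 0) (hw : |w| ≤ |u|) :
    |u + w| = |u| - |w| := by
  cases abs_cases u <;> cases abs_cases w <;> cases abs_cases (u + w) <;> nlinarith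

theorem exists_mul_pos_of_mem_rectHull {A : Set (Fin 2 → ℝ)} (hA : Convex ℝ A)
    {x q p : Fin 2 → ℝ} (hx : x ∈ rectHull A) (hq : q ∈ A) (hxq : dist x q = infDist x A)
    (hd : 0 < infDist x A) (hp : p ∈ A) (hpq : p ≠ q) :
    ∃ k, 0 < (p k - q k) * (q k - x k) := by
  by_contra! hcone
  set d := infDist x A
  -- A small step `y` from `q` towards `p` shortens every coordinate of `y - x`, so `y` is again a
  -- nearest point; the corner property of `y` then forces the step to vanish.
  set μ := d / (d + ‖p - q‖)
  have hμ0 : 0 < μ := by positivity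
  have hμ1 : μ ≤ 1 := div_le_one_of_le₀ (le_add_of_nonneg_right (norm_nonneg _)) (by positivity)
  have hμd : μ * ‖p - q‖ ≤ d := by
    rw [div_mul_eq_mul_div, div_le_iff₀ (by positivity)]
    nlinarith [norm_nonneg (p - q)]
  set y := (1 - μ) • q + μ • p
  have hy : y ∈ A := hA hq hp (sub_nonneg.2 hμ1) hμ0.le (sub_add_cancel 1 μ)
  have hyx : ∀ k, |y k - x k| = d - μ * |p k - q k| := by
    intro k
    have hk : y k - x k = (q k - x k) + μ * (p k - q k) := by
      simp only [y, Pi.add_apply, Pi.smul_apply, smul_eq_mul]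
      ring
    have hpqk : |p k - q k| ≤ ‖p - q‖ := by simpa using norm_le_pi_norm (p - q) k
    have hqx : |q k - x k| = d := by
      rw [abs_sub_comm]
      exact abs_sub_eq_infDist_of_mem_rectHull hA hx hq hxq k
    rw [hk, abs_add_of_mul_nonpos, hqx, abs_mul, abs_of_pos hμ0]
    · nlinarith [hcone k]
    · rw [abs_mul, abs_of_pos hμ0, hqx]
      nlinarith
  have hxy : dist x y = d := by
    refine le_antisymm ((dist_pi_le_iff hd.le).2 fun k => ?_) (infDist_le_dist_of_mem hy)
    rw [Real.dist_eq, abs_sub_comm, hyx]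
    nlinarith [abs_nonneg (p k - q k)]
  refine hpq (funext fun k => ?_)
  have hk := abs_sub_eq_infDist_of_mem_rectHull hA hx hy hxy k
  rw [abs_sub_comm, hyx] at hk
  have : |p k - q k| = 0 := (mul_eq_zero.1 (by linarith)).resolve_left hμ0.ne'
  exact sub_eq_zero.1 (abs_eq_zero.1 this)

theorem abs_add_abs_lt_abs_add_sub {δ α β : ℝ} (hα : 0 < δ * α) (hβ : δ * β < 0) :
    |α| + |β| < |δ + α - β| := by
  rcases lt_or_gt_of_ne (left_ne_zero_of_mul hα.ne') with hδ | hδ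
  · have hα : α < 0 := by nlinarith
    have hβ : 0 < β := by nlinarith
    rw [abs_of_neg hα, abs_of_pos hβ, abs_of_neg (by linarith)]
    linarith
  · have hα : 0 < α := by nlinarith
    have hβ : β < 0 := by nlinarith
    rw [abs_of_pos hα, abs_of_neg hβ, abs_of_pos (by linarith)]
    linarith

theorem infDist_add_infDist_lt_norm_sub {A : Set (Fin 2 → ℝ)} (hA : Convex ℝ A)
    {a b pa pb : Fin 2 → ℝ} (ha : a ∈ rectHull A) (hb : b ∈ rectHull A)
    (hpaA : pa ∈ A) (hpbA : pb ∈ A)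
    (hpa : dist a pa = infDist a A) (hpb : dist b pb = infDist b A) {i : Fin 2}
    (hai : pa i - a i = infDist a A) (hbi : pb i - b i = -infDist b A)
    (hr : 0 < infDist a A) (hs : 0 < infDist b A) (hlt : pb i < pa i) :
    infDist a A + infDist b A < ‖a - b‖ := by
  obtain ⟨k, hk⟩ :=
    exists_mul_pos_of_mem_rectHull hA ha hpaA hpa hr hpbA fun h => hlt.ne (h ▸ rfl)
  obtain ⟨k', hk'⟩ :=
    exists_mul_pos_of_mem_rectHull hA hb hpbA hpb hs hpaA fun h => hlt.ne' (h ▸ rfl)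
  have hki : k ≠ i := by
    rintro rfl
    nlinarith
  have hk'i : k' ≠ i := by
    rintro rfl
    nlinarith
  rw [show k' = k by omega] at hk'
  have hsum := abs_add_abs_lt_abs_add_sub hk (by linarith : (pb k - pa k) * (pb k - b k) < 0)
  rw [abs_sub_comm, abs_sub_eq_infDist_of_mem_rectHull hA ha hpaA hpa, abs_sub_comm,
    abs_sub_eq_infDist_of_mem_rectHull hA hb hpbA hpb,
    show pb k - pa k + (pa k - a k) - (pb k - b k) = -(a k - b k) by ring, abs_neg] at hsum
  exact hsum.trans_le (by simpa using norm_le_pi_norm (a - b) k)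

theorem sub_le_two_mul_norm_sub {A : Set (Fin 2 → ℝ)} (hA : Convex ℝ A)
    {a b pa pb : Fin 2 → ℝ} (ha : a ∈ rectHull A) (hb : b ∈ rectHull A)
    (hpaA : pa ∈ A) (hpbA : pb ∈ A)
    (hpa : dist a pa = infDist a A) (hpb : dist b pb = infDist b A) (i : Fin 2) :
    pa i - pb i ≤ 2 * ‖a - b‖ := by
  have hrs : infDist a A ≤ infDist b A + ‖a - b‖ := by
    simpa [dist_eq_norm, add_comm] using infDist_le_infDist_add_dist (x := a) (y := b) (s := A)
  have hsr : infDist b A ≤ infDist a A + ‖a - b‖ := by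
    simpa [dist_eq_norm, norm_sub_rev, add_comm] using
      infDist_le_infDist_add_dist (x := b) (y := a) (s := A)
  have habi : a i - b i ≤ ‖a - b‖ :=
    (le_abs_self _).trans (by simpa using norm_le_pi_norm (a - b) i)
  have hpai := abs_sub_eq_infDist_of_mem_rectHull hA ha hpaA hpa i
  have hpbi := abs_sub_eq_infDist_of_mem_rectHull hA hb hpbA hpb i
  rw [abs_sub_comm] at hpai hpbi
  have hpai' := abs_le.1 hpai.le
  have hpbi' := abs_le.1 hpbi.le
  rcases (abs_eq infDist_nonneg).1 hpai with hai | hai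
  swap
  · linarith
  rcases (abs_eq infDist_nonneg).1 hpbi with hbi | hbi
  · linarith
  by_contra! hlt
  have hcorner := infDist_add_infDist_lt_norm_sub hA ha hb hpaA hpbA hpa hpb hai hbi
    (by linarith) (by linarith) (by linarith)
  linarith

theorem stmt_1_general (A : Set (Fin 2 → ℝ)) (hconv : Convex ℝ A)
    (a b : Fin 2 → ℝ) (ha : a ∈ rectHull A) (hb : b ∈ rectHull A)
    (pa pb : Fin 2 → ℝ) (hpaA : pa ∈ A) (hpbA : pb ∈ A)
    (hpa : dist a pa = Metric.infDist a A) (hpb : dist b pb = Metric.infDist b A) :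
    ‖pa - pb‖ ≤ 2 * ‖a - b‖ := by
  refine (pi_norm_le_iff_of_nonneg (by positivity)).2 fun i => ?_
  rw [Pi.sub_apply, Real.norm_eq_abs, abs_le]
  constructor
  · have hba := sub_le_two_mul_norm_sub hconv hb ha hpbA hpaA hpb hpa i
    rw [norm_sub_rev] at hba
    linarith
  · exact sub_le_two_mul_norm_sub hconv ha hb hpaA hpbA hpa hpb i

/-- **Lemma (LN-PR)**: if `a, b` belong to the rectangular hull of a convex closed set
`A ⊆ ℝ²` (sup norm), then the metric projections onto `A` satisfy
`‖Pr(a;A) − Pr(b;A)‖ ≤ 2‖a − b‖`. -/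
theorem stmt_1 (A : Set (Fin 2 → ℝ)) (hconv : Convex ℝ A) (hclosed : IsClosed A)
    (hne : A.Nonempty) (a b : Fin 2 → ℝ) (ha : a ∈ rectHull A) (hb : b ∈ rectHull A)
    (pa pb : Fin 2 → ℝ) (hpaA : pa ∈ A) (hpbA : pb ∈ A)
    (hpa : dist a pa = Metric.infDist a A) (hpb : dist b pb = Metric.infDist b A) :
    ‖pa - pb‖ ≤ 2 * ‖a - b‖ :=
  stmt_1_general A hconv a b ha hb pa pb hpaA hpbA hpa hpb
end

section
/- Let A ⊆ ℝ² be a convex closed set and let a ∈ H[A], the rectangular hull of A, with a ∉ A. Then the metric projection of a onto A in the sup norm is a singleton, and this nearest point is a vertex of the square Q(a, dist(a,A)) = {y : ‖y−a‖_∞ ≤ dist(a,A)}. -/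
open Metric

section

variable {ι : Type*} [Fintype ι] [DecidableEq ι]

theorem StrongDual.apply_pi_eq_sum (f : StrongDual ℝ (ι → ℝ)) (x : ι → ℝ) :
    f x = ∑ i, f (Pi.single i 1) * x i := by
  conv_lhs => rw [← Finset.univ_sum_single x]
  simp only [map_sum]
  refine Finset.sum_congr rfl fun i _ => ?_
  rw [mul_comm, ← smul_eq_mul, ← map_smul, ← Pi.single_smul', smul_eq_mul, mul_one]

theorem add_mul_sum_abs_le_of_lt_on_ball {f : StrongDual ℝ (ι → ℝ)} {a : ι → ℝ} {r u : ℝ}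
    (hr : 0 < r) (hf : ∀ y ∈ ball a r, f y < u) :
    f a + r * ∑ i, |f (Pi.single i 1)| ≤ u := by
  set v : ι → ℝ := fun i => (SignType.sign (f (Pi.single i 1)) : ℝ)
  have hv : ‖v‖ ≤ 1 := by
    refine (pi_norm_le_iff_of_nonneg zero_le_one).2 fun i => ?_
    simp only [v, Real.norm_eq_abs]
    cases SignType.sign (f (Pi.single i 1)) <;> simp
  have hmem : a + r • v ∈ closure (ball a r) := by
    rw [closure_ball a hr.ne', mem_closedBall, dist_eq_norm, add_sub_cancel_left, norm_smul,
      Real.norm_of_nonneg hr.le]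
    exact mul_le_of_le_one_right hr.le hv
  have hle : f (a + r • v) ≤ u :=
    closure_minimal (fun y hy => (hf y hy).le) (isClosed_le f.continuous continuous_const) hmem
  simpa only [map_add, map_smul, smul_eq_mul, StrongDual.apply_pi_eq_sum f v, v, self_mul_sign]
    using hle

theorem mul_sub_eq_abs_mul_of_lt_on_ball {f : StrongDual ℝ (ι → ℝ)} {a p : ι → ℝ} {r u : ℝ}
    (hr : 0 < r) (hf : ∀ y ∈ ball a r, f y < u) (hp : dist p a ≤ r) (hpu : u ≤ f p) (i : ι) :
    f (Pi.single i 1) * (p i - a i) = |f (Pi.single i 1)| * r := by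
  set c : ι → ℝ := fun i => f (Pi.single i 1)
  have hterm : ∀ i, c i * (p i - a i) ≤ |c i| * r := fun i =>
    calc c i * (p i - a i) ≤ |c i| * |p i - a i| := (le_abs_self _).trans_eq (abs_mul _ _)
      _ ≤ |c i| * r := by
        gcongr
        exact (Real.dist_eq (p i) (a i) ▸ dist_le_pi_dist p a i).trans hp
  have hgap : f p - f a = ∑ i, c i * (p i - a i) := by
    rw [StrongDual.apply_pi_eq_sum f p, StrongDual.apply_pi_eq_sum f a, ← Finset.sum_sub_distrib]
    exact Finset.sum_congr rfl fun i _ => (mul_sub _ _ _).symm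
  have hsum : ∑ i, c i * (p i - a i) = ∑ i, |c i| * r := by
    refine le_antisymm (Finset.sum_le_sum fun i _ => hterm i) ?_
    have := add_mul_sum_abs_le_of_lt_on_ball hr hf
    rw [← Finset.sum_mul]
    linarith
  exact (Finset.sum_eq_sum_iff_of_le fun i _ => hterm i).1 hsum i (Finset.mem_univ i)

end

theorem eq_add_or_eq_sub_of_mul_sub_eq_abs_mul {c x y r : ℝ} (hc : c ≠ 0)
    (h : c * (x - y) = |c| * r) : x = y + r ∨ x = y - r := by
  rcases abs_choice c with habs | habs <;> rw [habs] at h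
  · left
    linarith [mul_left_cancel₀ hc (h.trans (by ring) : c * (x - y) = c * r)]
  · right
    linarith [mul_left_cancel₀ hc (h.trans (by ring) : c * (x - y) = c * -r)]

theorem apply_mem_of_mem_rectHull_s2 {A : Set (Fin 2 → ℝ)} {a : Fin 2 → ℝ} (ha : a ∈ rectHull A)
    (i : Fin 2) {I : Set ℝ} (hI : IsClosedInterval I) (h : ∀ x ∈ A, x i ∈ I) : a i ∈ I := by
  have huniv : IsClosedInterval Set.univ := ⟨isClosed_univ, Set.ordConnected_univ⟩
  fin_cases i
  · exact (ha {x | x 0 ∈ I ∧ x 1 ∈ Set.univ}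
      ⟨⟨I, Set.univ, hI, huniv, rfl⟩, fun x hx => ⟨h x hx, trivial⟩⟩).1
  · exact (ha {x | x 0 ∈ Set.univ ∧ x 1 ∈ I}
      ⟨⟨Set.univ, I, huniv, hI, rfl⟩, fun x hx => ⟨trivial, h x hx⟩⟩).2

/-- A functional separating `A` from a point of its rectangular hull cannot be blind to a
coordinate: otherwise the separating half-plane would be a strip `{x | x j ∈ I}` containing `A`. -/
theorem apply_single_ne_zero_of_mem_rectHull {A : Set (Fin 2 → ℝ)} {a : Fin 2 → ℝ}
    (ha : a ∈ rectHull A) {f : StrongDual ℝ (Fin 2 → ℝ)} {u : ℝ} (hfa : f a < u)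
    (hA : ∀ x ∈ A, u ≤ f x) (i : Fin 2) : f (Pi.single i 1) ≠ 0 := by
  intro hi
  set c := f (Pi.single i.rev 1)
  have hf : ∀ x, f x = c * x i.rev := by
    intro x
    rw [StrongDual.apply_pi_eq_sum, Fin.sum_univ_two]
    fin_cases i <;> simp_all [c]
  have hI : IsClosedInterval {t | u ≤ c * t} :=
    ⟨isClosed_le continuous_const (continuous_const_mul c),
      (convex_halfSpace_ge (LinearMap.mul ℝ ℝ c).isLinear u).ordConnected⟩
  have hua : u ≤ c * a i.rev := apply_mem_of_mem_rectHull_s2 ha i.rev hI fun x hx => by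
    rw [Set.mem_ofPred_eq, ← hf]
    exact hA x hx
  linarith [hf a]

/-- **Lemma (WMP-S)**: let `A ⊆ ℝ²` (sup norm) be nonempty convex closed and let
`a ∈ H[A] \ A`. Then the nearest point of `A` to `a` is unique, and every nearest point
is a vertex of the square `Q(a, dist(a,A))`, i.e. each of its coordinates equals
`a i ± dist(a,A)`. -/
theorem stmt_2 (A : Set (Fin 2 → ℝ)) (hconv : Convex ℝ A) (hclosed : IsClosed A)
    (hne : A.Nonempty) (a : Fin 2 → ℝ) (ha : a ∈ rectHull A) (haA : a ∉ A) :
    (∃! p, p ∈ A ∧ dist a p = Metric.infDist a A) ∧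
      ∀ p, p ∈ A → dist a p = Metric.infDist a A →
        ∀ i : Fin 2, p i = a i + Metric.infDist a A ∨ p i = a i - Metric.infDist a A := by
  set r := infDist a A
  have hr : 0 < r := (hclosed.notMem_iff_infDist_pos hne).1 haA
  obtain ⟨f, u, hball, hA⟩ :=
    geometric_hahn_banach_open (convex_ball a r) isOpen_ball hconv disjoint_ball_infDist
  have hc := apply_single_ne_zero_of_mem_rectHull ha (hball a (mem_ball_self hr)) hA
  have hsupp : ∀ p ∈ A, dist a p = r →
      ∀ i, f (Pi.single i 1) * (p i - a i) = |f (Pi.single i 1)| * r := fun p hp hpd =>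
    mul_sub_eq_abs_mul_of_lt_on_ball hr hball (dist_comm p a ▸ hpd.le) (hA p hp)
  refine ⟨?_, fun p hp hpd i => eq_add_or_eq_sub_of_mul_sub_eq_abs_mul (hc i) (hsupp p hp hpd i)⟩
  obtain ⟨p, hpA, hpd⟩ := hclosed.exists_infDist_eq_dist hne a
  refine ⟨p, ⟨hpA, hpd.symm⟩, fun q ⟨hqA, hqd⟩ => funext fun i => ?_⟩
  have := mul_left_cancel₀ (hc i) ((hsupp q hqA hqd i).trans (hsupp p hpA hpd.symm i).symm)
  linarith
end

section
/- Let S ⊆ ℝ² be a convex compact nonempty set. Then the center of its rectangular hull H[S] belongs to S. -/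
/-!
If the center `c` missed `S`, a linear functional `f = n₀ x₀ + n₁ x₁` would separate `c`
strictly from `S`. For each coordinate `i` pick a point of `S` minimizing `nᵢ xᵢ` (an endpoint of
the `i`-th side of the hull); then `nᵢ pᵢ + nᵢ yᵢ ≤ nᵢ (aᵢ + bᵢ) = 2 nᵢ cᵢ` for every `y ∈ S`.
Using the two chosen points `p, q` crosswise gives `f p + f q ≤ 2 f c`, contradicting `f > f c`
on `S`. Only two coordinates can be paired off this way, which is why the result is planar.
-/

noncomputable def rectHullCenter {ι : Type*} (S : Set (ι → ℝ)) : ι → ℝ :=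
  fun i => (sInf ((fun p : ι → ℝ => p i) '' S) + sSup ((fun p : ι → ℝ => p i) '' S)) / 2

theorem IsCompact.exists_mem_forall_mul_add_mul_le {A : Set ℝ} (hA : IsCompact A)
    (hne : A.Nonempty) (t : ℝ) : ∃ x ∈ A, ∀ y ∈ A, t * x + t * y ≤ t * (sInf A + sSup A) := by
  rcases le_or_gt 0 t with ht | ht
  · refine ⟨sInf A, hA.sInf_mem hne, fun y hy => ?_⟩
    rw [← mul_add]
    exact mul_le_mul_of_nonneg_left (add_le_add_right (le_csSup hA.bddAbove hy) _) ht
  · refine ⟨sSup A, hA.sSup_mem hne, fun y hy => ?_⟩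
    rw [← mul_add, add_comm (sInf A)]
    exact mul_le_mul_of_nonpos_left (add_le_add_right (csInf_le hA.bddBelow hy) _) ht.le

theorem IsCompact.exists_mem_forall_mul_apply_add_le {ι : Type*} {S : Set (ι → ℝ)}
    (hS : IsCompact S) (hne : S.Nonempty) (i : ι) (t : ℝ) :
    ∃ p ∈ S, ∀ y ∈ S, t * p i + t * y i ≤ 2 * (t * rectHullCenter S i) := by
  obtain ⟨_, ⟨p, hp, rfl⟩, hmax⟩ :=
    (hS.image (continuous_apply i)).exists_mem_forall_mul_add_mul_le (hne.image _) t
  refine ⟨p, hp, fun y hy => ?_⟩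
  have hy_le := hmax _ ⟨y, hy, rfl⟩
  simp only [rectHullCenter]
  linarith

theorem exists_mem_add_le_two_mul_rectHullCenter {S : Set (Fin 2 → ℝ)} (hS : IsCompact S)
    (hne : S.Nonempty) (f : (Fin 2 → ℝ) →ₗ[ℝ] ℝ) :
    ∃ p ∈ S, ∃ q ∈ S, f p + f q ≤ 2 * f (rectHullCenter S) := by
  set e : Fin 2 → Fin 2 → ℝ := fun i j => if i = j then 1 else 0
  obtain ⟨p, hp, hp_le⟩ := hS.exists_mem_forall_mul_apply_add_le hne 0 (f (e 0))
  obtain ⟨q, hq, hq_le⟩ := hS.exists_mem_forall_mul_apply_add_le hne 1 (f (e 1))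
  refine ⟨p, hp, q, hq, ?_⟩
  have h0 := hp_le q hq
  have h1 := hq_le p hp
  rw [f.pi_apply_eq_sum_univ p, f.pi_apply_eq_sum_univ q,
    f.pi_apply_eq_sum_univ (rectHullCenter S)]
  simp only [Fin.sum_univ_two, smul_eq_mul]
  linarith

/-- **Lemma (CH-RH)**: the center of the rectangular hull of a nonempty convex compact set
`S ⊆ ℝ²` belongs to `S`. Writing `H[S] = [a₁,b₁] × [a₂,b₂]` with
`aᵢ = inf (Prjᵢ S)`, `bᵢ = sup (Prjᵢ S)`, the center is the point with coordinates
`(aᵢ + bᵢ)/2`. -/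
theorem stmt_4 (S : Set (Fin 2 → ℝ)) (hconv : Convex ℝ S) (hcomp : IsCompact S)
    (hne : S.Nonempty) :
    (fun i : Fin 2 =>
        (sInf ((fun p : Fin 2 → ℝ => p i) '' S) + sSup ((fun p : Fin 2 → ℝ => p i) '' S)) / 2)
      ∈ S := by
  change rectHullCenter S ∈ S
  by_contra hc
  obtain ⟨f, u, hfc, hfS⟩ := geometric_hahn_banach_point_closed hconv hcomp.isClosed hc
  obtain ⟨p, hp, q, hq, hle⟩ := exists_mem_add_le_two_mul_rectHullCenter hcomp hne f.toLinearMap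
  have hp_sep := hfS p hp
  have hq_sep := hfS q hq
  simp only [ContinuousLinearMap.coe_coe] at hle
  linarith
end

section
/- Let 𝔠 be a family of nonempty convex closed subsets of ℝ², either finite or with at least one bounded member. If for every C₁, C₁', C₂, C₂' ∈ 𝔠 the projections onto the first coordinate axis satisfy Prj₁[C₁ ∩ C₁'] ∩ Prj₁[C₂ ∩ C₂'] ≠ ∅, then the whole family 𝔠 has a common point, and moreover Prj₁[⋂_{C∈𝔠} C] = ⋂_{C,C'∈𝔠} Prj₁[C ∩ C']. -/
/-! If `x` lies in every `Prj₁[C ∩ C']`, the vertical sections `{y | (x, y) ∈ C}` are closed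
intervals meeting pairwise, so one-dimensional Helly gives them a common point: this is
`Prj₁[⋂ 𝔠] = ⋂ Prj₁[C ∩ C']`. For a finite family the hypothesis says that the intervals
`Prj₁[C ∩ C']` meet pairwise, so one-dimensional Helly puts some `x` in all of them, and the
family has a common point above `x`. A bounded member is compact, which reduces the infinite
case to finite subfamilies. -/

open Set Bornology Module

theorem Real.helly_of_finite {𝔡 : Set (Set ℝ)} (hfin : 𝔡.Finite)
    (hconv : ∀ C ∈ 𝔡, Convex ℝ C) (hpair : ∀ C ∈ 𝔡, ∀ C' ∈ 𝔡, (C ∩ C').Nonempty) :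
    (⋂₀ 𝔡).Nonempty := by
  lift 𝔡 to Finset (Set ℝ) using hfin
  refine Convex.helly_theorem_set' hconv fun G hG hcard => ?_
  rw [finrank_self] at hcard
  interval_cases h : G.card
  · simp [Finset.card_eq_zero.1 h]
  · obtain ⟨C, rfl⟩ := Finset.card_eq_one.1 h
    simpa using hpair C (hG (by simp)) C (hG (by simp))
  · obtain ⟨C, C', -, rfl⟩ := Finset.card_eq_two.1 h
    simpa using hpair C (hG (by simp)) C' (hG (by simp))

theorem sInter_nonempty_of_finite_or_isBounded {X : Type*} [PseudoMetricSpace X]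
    [ProperSpace X] {𝔡 : Set (Set X)} (hcl : ∀ C ∈ 𝔡, IsClosed C)
    (hfb : 𝔡.Finite ∨ ∃ C ∈ 𝔡, IsBounded C)
    (h : ∀ 𝔢 ⊆ 𝔡, 𝔢.Finite → (⋂₀ 𝔢).Nonempty) : (⋂₀ 𝔡).Nonempty := by
  obtain hfin | ⟨C₀, hC₀, hbdd⟩ := hfb
  · exact h 𝔡 subset_rfl hfin
  have hK : IsCompact C₀ := Metric.isCompact_of_isClosed_isBounded (hcl C₀ hC₀) hbdd
  refine (hK.nonempty_inter_sInter hcl fun 𝔢 h𝔢 hfin => ?_).mono inter_subset_right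
  simpa [sInter_insert] using h (insert C₀ 𝔢) (insert_subset hC₀ h𝔢) (hfin.insert C₀)

theorem Real.helly_of_finite_or_isBounded {𝔡 : Set (Set ℝ)} (hconv : ∀ C ∈ 𝔡, Convex ℝ C)
    (hcl : ∀ C ∈ 𝔡, IsClosed C) (hfb : 𝔡.Finite ∨ ∃ C ∈ 𝔡, IsBounded C)
    (hpair : ∀ C ∈ 𝔡, ∀ C' ∈ 𝔡, (C ∩ C').Nonempty) : (⋂₀ 𝔡).Nonempty :=
  sInter_nonempty_of_finite_or_isBounded hcl hfb fun _ h𝔢 hfin =>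
    Real.helly_of_finite hfin (fun C hC => hconv C (h𝔢 hC))
      (fun C hC C' hC' => hpair C (h𝔢 hC) C' (h𝔢 hC'))

local notation "Prj₁" => fun p : Fin 2 → ℝ => p 0

theorem isometry_vec2 (x : ℝ) : Isometry (fun y : ℝ => ![x, y]) :=
  Isometry.of_dist_eq fun y y' => by simp [dist_pi_def, Fin.univ_succ]

theorem convex_preimage_vec2 (x : ℝ) {C : Set (Fin 2 → ℝ)} (hC : Convex ℝ C) :
    Convex ℝ ((fun y : ℝ => ![x, y]) ⁻¹' C) := by
  have : ⇑(AffineMap.lineMap (k := ℝ) ![x, 0] ![x, 1]) = fun y : ℝ => ![x, y] := by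
    ext y i; fin_cases i <;> simp [AffineMap.lineMap_apply]
  exact this ▸ hC.affine_preimage _

theorem mem_image_eval_zero_iff {s : Set (Fin 2 → ℝ)} {x : ℝ} :
    x ∈ Prj₁ '' s ↔ ((fun y : ℝ => ![x, y]) ⁻¹' s).Nonempty := by
  constructor
  · rintro ⟨p, hp, rfl⟩
    have hp' : ![p 0, p 1] = p := by ext i; fin_cases i <;> rfl
    exact ⟨p 1, show ![p 0, p 1] ∈ s by rwa [hp']⟩
  · rintro ⟨y, hy⟩
    exact ⟨_, hy, rfl⟩

theorem image_sInter_eq_iInter_image_inter (𝔡 : Set (Set (Fin 2 → ℝ)))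
    (hconv : ∀ C ∈ 𝔡, Convex ℝ C) (hcl : ∀ C ∈ 𝔡, IsClosed C)
    (hfb : 𝔡.Finite ∨ ∃ C ∈ 𝔡, IsBounded C) :
    Prj₁ '' ⋂₀ 𝔡 = ⋂ C ∈ 𝔡, ⋂ C' ∈ 𝔡, Prj₁ '' (C ∩ C') := by
  refine subset_antisymm (subset_iInter₂ fun C hC => subset_iInter₂ fun C' hC' =>
    image_mono (subset_inter (sInter_subset_of_mem hC) (sInter_subset_of_mem hC')))
    fun x hx => ?_
  simp only [mem_iInter₂, mem_image_eval_zero_iff] at hx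
  set e : ℝ → Fin 2 → ℝ := fun y => ![x, y]
  have key := Real.helly_of_finite_or_isBounded (𝔡 := (e ⁻¹' ·) '' 𝔡)
    (forall_mem_image.2 fun C hC => convex_preimage_vec2 x (hconv C hC))
    (forall_mem_image.2 fun C hC => (hcl C hC).preimage (isometry_vec2 x).continuous)
    (hfb.imp (·.image _) fun ⟨C, hC, hbdd⟩ =>
      ⟨_, mem_image_of_mem _ hC, (isometry_vec2 x).antilipschitz.isBounded_preimage hbdd⟩)
    (forall_mem_image.2 fun C hC => forall_mem_image.2 fun C' hC' => hx C hC C' hC')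
  rw [sInter_image, ← preimage_sInter] at key
  exact mem_image_eval_zero_iff.2 key

theorem sInter_nonempty_of_finite_of_projections_meet (𝔡 : Set (Set (Fin 2 → ℝ)))
    (hfin : 𝔡.Finite) (hconv : ∀ C ∈ 𝔡, Convex ℝ C) (hcl : ∀ C ∈ 𝔡, IsClosed C)
    (hproj : ∀ C₁ ∈ 𝔡, ∀ C₁' ∈ 𝔡, ∀ C₂ ∈ 𝔡, ∀ C₂' ∈ 𝔡,
      (Prj₁ '' (C₁ ∩ C₁') ∩ Prj₁ '' (C₂ ∩ C₂')).Nonempty) :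
    (⋂₀ 𝔡).Nonempty := by
  obtain ⟨x, hx⟩ := Real.helly_of_finite ((hfin.prod hfin).image fun P => Prj₁ '' (P.1 ∩ P.2))
    (by
      rintro _ ⟨⟨C, C'⟩, ⟨hC, hC'⟩, rfl⟩
      exact ((hconv C hC).inter (hconv C' hC')).is_linear_image
        (LinearMap.proj 0).isLinear)
    (by
      rintro _ ⟨⟨C₁, C₁'⟩, ⟨h₁, h₁'⟩, rfl⟩ _ ⟨⟨C₂, C₂'⟩, ⟨h₂, h₂'⟩, rfl⟩
      exact hproj C₁ h₁ C₁' h₁' C₂ h₂ C₂' h₂')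
  rw [sInter_image] at hx
  have hx' : x ∈ Prj₁ '' ⋂₀ 𝔡 := by
    rw [image_sInter_eq_iInter_image_inter 𝔡 hconv hcl (.inl hfin)]
    simp only [mem_iInter₂] at hx ⊢
    exact fun C hC C' hC' => hx (C, C') ⟨hC, hC'⟩
  exact image_nonempty.1 ⟨x, hx'⟩

theorem stmt_5_general (𝔠 : Set (Set (Fin 2 → ℝ)))
    (hconv : ∀ C ∈ 𝔠, Convex ℝ C) (hcl : ∀ C ∈ 𝔠, IsClosed C)
    (hfb : 𝔠.Finite ∨ ∃ C ∈ 𝔠, Bornology.IsBounded C)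
    (hproj : ∀ C₁ ∈ 𝔠, ∀ C₁' ∈ 𝔠, ∀ C₂ ∈ 𝔠, ∀ C₂' ∈ 𝔠,
      ((fun p : Fin 2 → ℝ => p 0) '' (C₁ ∩ C₁') ∩
        (fun p : Fin 2 → ℝ => p 0) '' (C₂ ∩ C₂')).Nonempty) :
    (⋂₀ 𝔠).Nonempty ∧
      (fun p : Fin 2 → ℝ => p 0) '' (⋂₀ 𝔠) =
        ⋂ C ∈ 𝔠, ⋂ C' ∈ 𝔠, (fun p : Fin 2 → ℝ => p 0) '' (C ∩ C') := by
  refine ⟨sInter_nonempty_of_finite_or_isBounded hcl hfb fun 𝔢 h𝔢 hfin => ?_,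
    image_sInter_eq_iInter_image_inter 𝔠 hconv hcl hfb⟩
  exact sInter_nonempty_of_finite_of_projections_meet 𝔢 hfin (fun C hC => hconv C (h𝔢 hC))
    (fun C hC => hcl C (h𝔢 hC)) fun C₁ h₁ C₁' h₁' C₂ h₂ C₂' h₂' =>
      hproj C₁ (h𝔢 h₁) C₁' (h𝔢 h₁') C₂ (h𝔢 h₂) C₂' (h𝔢 h₂')

/-- **Proposition (PR-PR), a Helly-type theorem in the plane**: let `𝔠` be a family of
nonempty convex closed subsets of `ℝ²`, either finite or containing a bounded member.
If `Prj₁[C₁ ∩ C₁'] ∩ Prj₁[C₂ ∩ C₂'] ≠ ∅` for all `C₁, C₁', C₂, C₂' ∈ 𝔠`, then the family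
has a common point and `Prj₁[⋂ 𝔠] = ⋂_{C,C'∈𝔠} Prj₁[C ∩ C']`. -/
theorem stmt_5 (𝔠 : Set (Set (Fin 2 → ℝ)))
    (hne : ∀ C ∈ 𝔠, C.Nonempty) (hconv : ∀ C ∈ 𝔠, Convex ℝ C) (hcl : ∀ C ∈ 𝔠, IsClosed C)
    (hfb : 𝔠.Finite ∨ ∃ C ∈ 𝔠, Bornology.IsBounded C)
    (hproj : ∀ C₁ ∈ 𝔠, ∀ C₁' ∈ 𝔠, ∀ C₂ ∈ 𝔠, ∀ C₂' ∈ 𝔠,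
      ((fun p : Fin 2 → ℝ => p 0) '' (C₁ ∩ C₁') ∩
        (fun p : Fin 2 → ℝ => p 0) '' (C₂ ∩ C₂')).Nonempty) :
    (⋂₀ 𝔠).Nonempty ∧
      (fun p : Fin 2 → ℝ => p 0) '' (⋂₀ 𝔠) =
        ⋂ C ∈ 𝔠, ⋂ C' ∈ 𝔠, (fun p : Fin 2 → ℝ => p 0) '' (C ∩ C') :=
  stmt_5_general 𝔠 hconv hcl hfb hproj
end

section
/- Let X be a two-dimensional Banach space, let 𝒦 be a collection of convex closed subsets of X with nonempty total intersection, and let S ⊆ X be a convex closed set symmetric with respect to 0. Suppose either some member of 𝒦 is bounded or S is bounded. Then (⋂_{K∈𝒦} K) + S = ⋂_{K,K'∈𝒦} ((K ∩ K') + S). -/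
/-!
A point `x` lies in `(⋂₀ 𝒦) + S` exactly when the reflected translate `x - S` meets `⋂₀ 𝒦`.
The right-hand side says that `x - S` meets every `K ∩ K'`; together with `⋂₀ 𝒦 ≠ ∅` this
means that any three members of the family `𝒦 ∪ {x - S}` have a common point. Helly's theorem
in the plane then gives a common point of every finite subfamily, and compactness of one member
of the family (the bounded one, closed in a finite-dimensional space) gives a common point of
the whole family.
-/

open Pointwise

open Finset Module

theorem Set.mem_add_iff_inter_vadd_neg_nonempty {G : Type*} [AddCommGroup G] {A S : Set G}
    {x : G} : x ∈ A + S ↔ (A ∩ (x +ᵥ -S)).Nonempty := by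
  have hmem : ∀ y, y ∈ x +ᵥ -S ↔ x - y ∈ S := fun y => by
    rw [Set.mem_vadd_set_iff_neg_vadd_mem, Set.mem_neg, vadd_eq_add, neg_add_rev, neg_neg,
      neg_add_eq_sub]
  constructor
  · rintro ⟨a, ha, s, hs, rfl⟩
    exact ⟨a, ha, (hmem a).2 (by rwa [add_sub_cancel_left])⟩
  · rintro ⟨a, ha, hax⟩
    exact ⟨a, ha, x - a, (hmem a).1 hax, add_sub_cancel a x⟩

namespace Convex

variable {𝕜 E : Type*} [Field 𝕜] [LinearOrder 𝕜] [IsStrictOrderedRing 𝕜]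
  [AddCommGroup E] [Module 𝕜 E] [FiniteDimensional 𝕜 E] [TopologicalSpace E]

theorem helly_theorem_set_of_exists_isCompact {F : Set (Set E)}
    (h_convex : ∀ K ∈ F, Convex 𝕜 K) (h_closed : ∀ K ∈ F, IsClosed K)
    (h_compact : ∃ K ∈ F, IsCompact K)
    (h_inter : ∀ G : Finset (Set E), (G : Set (Set E)) ⊆ F → #G ≤ finrank 𝕜 E + 1 →
      (⋂₀ (G : Set (Set E))).Nonempty) :
    (⋂₀ F).Nonempty := by
  obtain ⟨K₀, hK₀F, hK₀⟩ := h_compact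
  refine (hK₀.nonempty_inter_sInter h_closed fun A hAF hA => ?_).mono Set.inter_subset_right
  have hfin := (hA.insert K₀).coe_toFinset
  have hsub : ((hA.insert K₀).toFinset : Set (Set E)) ⊆ F := by
    rw [hfin]; exact Set.insert_subset hK₀F hAF
  rw [← Set.sInter_insert, ← hfin]
  exact helly_theorem_set' (fun K hK => h_convex K (hsub hK))
    fun G hG => h_inter G ((Finset.coe_subset.2 hG).trans hsub)

theorem inter_sInter_nonempty_of_forall_card_le_finrank {T : Set E} {𝒦 : Set (Set E)}
    (hT_convex : Convex 𝕜 T) (h_convex : ∀ K ∈ 𝒦, Convex 𝕜 K)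
    (hT_closed : IsClosed T) (h_closed : ∀ K ∈ 𝒦, IsClosed K)
    (h_compact : IsCompact T ∨ ∃ K ∈ 𝒦, IsCompact K) (h_sInter : (⋂₀ 𝒦).Nonempty)
    (h_inter : ∀ G : Finset (Set E), (G : Set (Set E)) ⊆ 𝒦 → #G ≤ finrank 𝕜 E →
      (T ∩ ⋂₀ (G : Set (Set E))).Nonempty) :
    (T ∩ ⋂₀ 𝒦).Nonempty := by
  classical
  rw [← Set.sInter_insert]
  refine helly_theorem_set_of_exists_isCompact (𝕜 := 𝕜)
    (Set.forall_mem_insert.2 ⟨hT_convex, h_convex⟩)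
    (Set.forall_mem_insert.2 ⟨hT_closed, h_closed⟩) ?_ fun G hG hcard => ?_
  · rcases h_compact with hT | ⟨K, hK, hKc⟩
    · exact ⟨T, Set.mem_insert T 𝒦, hT⟩
    · exact ⟨K, Set.mem_insert_of_mem T hK, hKc⟩
  by_cases hTG : T ∈ G
  · have hrest : ((G.erase T : Finset (Set E)) : Set (Set E)) ⊆ 𝒦 := fun K hK => by
      obtain ⟨hKT, hKG⟩ := Finset.mem_erase.1 hK
      exact (hG hKG).resolve_left hKT
    rw [← Finset.insert_erase hTG, Finset.coe_insert, Set.sInter_insert]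
    exact h_inter _ hrest (by rw [Finset.card_erase_of_mem hTG]; omega)
  · have hG𝒦 : (G : Set (Set E)) ⊆ 𝒦 := fun K hK =>
      (hG hK).resolve_left fun hKT => hTG (hKT ▸ hK)
    exact h_sInter.mono (Set.sInter_subset_sInter hG𝒦)

end Convex

theorem Set.inter_sInter_nonempty_of_card_le_two {α : Type*} {T : Set α} {𝒦 : Set (Set α)}
    (hT : T.Nonempty) (h_pair : ∀ K ∈ 𝒦, ∀ K' ∈ 𝒦, (T ∩ (K ∩ K')).Nonempty)
    {G : Finset (Set α)} (hG : (G : Set (Set α)) ⊆ 𝒦) (hcard : #G ≤ 2) :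
    (T ∩ ⋂₀ (G : Set (Set α))).Nonempty := by
  interval_cases h : #G
  · simpa [Finset.card_eq_zero.1 h] using hT
  · obtain ⟨K, rfl⟩ := Finset.card_eq_one.1 h
    have hK : K ∈ 𝒦 := hG (Finset.mem_coe.2 (Finset.mem_singleton_self K))
    simpa using h_pair K hK K hK
  · obtain ⟨K, K', -, rfl⟩ := Finset.card_eq_two.1 h
    simpa [Set.insert_subset_iff] using h_pair K (hG (by simp)) K' (hG (by simp))

theorem stmt_6_general {X : Type*} [NormedAddCommGroup X] [NormedSpace ℝ X]
    (hdim : Module.finrank ℝ X = 2)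
    (𝒦 : Set (Set X)) (hconv : ∀ K ∈ 𝒦, Convex ℝ K) (hcl : ∀ K ∈ 𝒦, IsClosed K)
    (hint : (⋂₀ 𝒦).Nonempty)
    (S : Set X) (hSne : S.Nonempty) (hSconv : Convex ℝ S) (hScl : IsClosed S)
    (hb : (∃ K ∈ 𝒦, Bornology.IsBounded K) ∨ Bornology.IsBounded S) :
    (⋂₀ 𝒦) + S = ⋂ K ∈ 𝒦, ⋂ K' ∈ 𝒦, (K ∩ K') + S := by
  have : FiniteDimensional ℝ X := Module.finite_of_finrank_eq_succ hdim
  refine Set.Subset.antisymm (Set.subset_iInter₂ fun K hK => Set.subset_iInter₂ fun K' hK' =>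
    Set.add_subset_add_right (Set.subset_inter (Set.sInter_subset_of_mem hK)
      (Set.sInter_subset_of_mem hK'))) fun x hx => ?_
  have h_pair : ∀ K ∈ 𝒦, ∀ K' ∈ 𝒦, ((x +ᵥ -S) ∩ (K ∩ K')).Nonempty := fun K hK K' hK' => by
    rw [Set.inter_comm, ← Set.mem_add_iff_inter_vadd_neg_nonempty]
    exact Set.mem_iInter₂.1 (Set.mem_iInter₂.1 hx K hK) K' hK'
  have h_compact : IsCompact (x +ᵥ -S) ∨ ∃ K ∈ 𝒦, IsCompact K := by
    rcases hb with ⟨K, hK, hKb⟩ | hSb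
    · exact .inr ⟨K, hK, Metric.isCompact_of_isClosed_isBounded (hcl K hK) hKb⟩
    · exact .inl (Metric.isCompact_of_isClosed_isBounded (hScl.neg.vadd x) (hSb.neg.vadd x))
  rw [Set.mem_add_iff_inter_vadd_neg_nonempty, Set.inter_comm]
  exact Convex.inter_sInter_nonempty_of_forall_card_le_finrank (hSconv.neg.vadd x) hconv
    (hScl.neg.vadd x) hcl h_compact hint fun G hG hcard =>
      Set.inter_sInter_nonempty_of_card_le_two hSne.neg.vadd_set h_pair hG (hdim ▸ hcard)

/-- **Lemma (H-IN)**: let `X` be a two-dimensional Banach space, `𝒦` a collection of convex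
closed subsets of `X` with nonempty total intersection, and `S ⊆ X` a nonempty convex closed
set symmetric with respect to `0`. If some member of `𝒦` is bounded or `S` is bounded, then
`(⋂ 𝒦) + S = ⋂_{K,K'∈𝒦} ((K ∩ K') + S)`. -/
theorem stmt_6 {X : Type*} [NormedAddCommGroup X] [NormedSpace ℝ X]
    (hdim : Module.finrank ℝ X = 2)
    (𝒦 : Set (Set X)) (hconv : ∀ K ∈ 𝒦, Convex ℝ K) (hcl : ∀ K ∈ 𝒦, IsClosed K)
    (hint : (⋂₀ 𝒦).Nonempty)
    (S : Set X) (hSne : S.Nonempty) (hSconv : Convex ℝ S) (hScl : IsClosed S)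
    (hSsym : -S = S)
    (hb : (∃ K ∈ 𝒦, Bornology.IsBounded K) ∨ Bornology.IsBounded S) :
    (⋂₀ 𝒦) + S = ⋂ K ∈ 𝒦, ⋂ K' ∈ 𝒦, (K ∩ K') + S :=
  stmt_6_general hdim 𝒦 hconv hcl hint S hSne hSconv hScl hb
end

section
/- Let (M, ρ) be a pseudometric space and let F assign to each x ∈ M a nonempty closed bounded interval F(x) = [a(x), b(x)] ⊆ ℝ. Suppose λ ≥ 0 and for all x, y ∈ M one has a(x) − b(y) ≤ λ·ρ(x,y). Then the function f(x) = inf_{y∈M} ( b(y) + λ·ρ(x,y) ) satisfies f(x) ∈ F(x) for all x and |f(x) − f(y)| ≤ λ·ρ(x,y) for all x, y ∈ M. -/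
/-! `f = ⨅ y, b y + λ ρ(·, y)` lies above `a` because every term does, by hypothesis, and below
`b` because of the term `y = x`. Each term is `λ`-Lipschitz by the triangle inequality, and so is
their infimum. -/

open Set

section InfConvolution

variable {M : Type*} {ρ : M → M → ℝ} {b : M → ℝ} {l : ℝ}

theorem iInf_add_mul_le_self {x : M} (hbdd : BddBelow (range fun y => b y + l * ρ x y))
    (hρx : ρ x x = 0) : ⨅ y, (b y + l * ρ x y) ≤ b x := by
  simpa [hρx] using ciInf_le hbdd x

theorem iInf_add_mul_le_add {x y : M} (hbdd : BddBelow (range fun z => b z + l * ρ x z))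
    (hl : 0 ≤ l) (htri : ∀ z, ρ x z ≤ ρ x y + ρ y z) :
    ⨅ z, (b z + l * ρ x z) ≤ (⨅ z, (b z + l * ρ y z)) + l * ρ x y := by
  have : Nonempty M := ⟨x⟩
  rw [← sub_le_iff_le_add]
  refine le_ciInf fun z => ?_
  calc (⨅ z, (b z + l * ρ x z)) - l * ρ x y ≤ b z + l * ρ x z - l * ρ x y := by
        gcongr; exact ciInf_le hbdd z
    _ ≤ b z + l * ρ y z := by linarith [mul_le_mul_of_nonneg_left (htri z) hl]

theorem abs_iInf_add_mul_sub_iInf_add_mul_le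
    (hbdd : ∀ x, BddBelow (range fun z => b z + l * ρ x z)) (hl : 0 ≤ l)
    (hsymm : ∀ x y, ρ x y = ρ y x) (htri : ∀ x y z, ρ x y ≤ ρ x z + ρ z y) (x y : M) :
    |(⨅ z, (b z + l * ρ x z)) - ⨅ z, (b z + l * ρ y z)| ≤ l * ρ x y := by
  have hxy := iInf_add_mul_le_add (hbdd x) hl fun z => htri x z y
  have hyx := iInf_add_mul_le_add (hbdd y) hl fun z => htri y z x
  rw [hsymm y x] at hyx
  rw [abs_sub_le_iff]
  constructor <;> linarith

end InfConvolution

theorem stmt_8_general {M : Type*} (ρ : M → M → ℝ)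
    (hρself : ∀ x, ρ x x = 0) (hρsymm : ∀ x y, ρ x y = ρ y x)
    (hρtri : ∀ x y z, ρ x y ≤ ρ x z + ρ z y)
    (a b : M → ℝ)
    (l : ℝ) (hl : 0 ≤ l)
    (h : ∀ x y, a x - b y ≤ l * ρ x y) :
    (∀ x : M, (⨅ y : M, (b y + l * ρ x y)) ∈ Set.Icc (a x) (b x)) ∧
      (∀ x y : M,
        |(⨅ z : M, (b z + l * ρ x z)) - (⨅ z : M, (b z + l * ρ y z))| ≤ l * ρ x y) := by
  have hterm : ∀ x y, a x ≤ b y + l * ρ x y := fun x y => by linarith [h x y]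
  have hbdd : ∀ x, BddBelow (range fun y => b y + l * ρ x y) :=
    fun x => ⟨a x, forall_mem_range.2 (hterm x)⟩
  have hlower : ∀ x, a x ≤ ⨅ y, (b y + l * ρ x y) := fun x =>
    have : Nonempty M := ⟨x⟩
    le_ciInf (hterm x)
  exact ⟨fun x => ⟨hlower x, iInf_add_mul_le_self (hbdd x) (hρself x)⟩,
    abs_iInf_add_mul_sub_iInf_add_mul_le hbdd hl hρsymm hρtri⟩

/-- **Lemma (FP-R1)(i), explicit Lipschitz selection in `ℝ`**: let `(M,ρ)` be a pseudometric
space, `F(x) = [a(x), b(x)]` nonempty compact intervals, `λ ≥ 0`, and suppose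
`a(x) − b(y) ≤ λ·ρ(x,y)` for all `x, y`. Then `f(x) = inf_y (b(y) + λ·ρ(x,y))` is a selection
of `F` which is `λ`-Lipschitz with respect to `ρ`. -/
theorem stmt_8 {M : Type*} (ρ : M → M → ℝ)
    (hρself : ∀ x, ρ x x = 0) (hρsymm : ∀ x y, ρ x y = ρ y x)
    (hρtri : ∀ x y z, ρ x y ≤ ρ x z + ρ z y)
    (a b : M → ℝ) (hab : ∀ x, a x ≤ b x)
    (l : ℝ) (hl : 0 ≤ l)
    (h : ∀ x y, a x - b y ≤ l * ρ x y) :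
    (∀ x : M, (⨅ y : M, (b y + l * ρ x y)) ∈ Set.Icc (a x) (b x)) ∧
      (∀ x y : M,
        |(⨅ z : M, (b z + l * ρ x z)) - (⨅ z : M, (b z + l * ρ y z))| ≤ l * ρ x y) :=
  stmt_8_general ρ hρself hρsymm hρtri a b l hl h
end

section
/- Let (M, ρ) be a pseudometric space and let F : M → 𝒦(ℝ) map into nonempty compact intervals of ℝ. Suppose that for every pair x, y ∈ M there exist g(x) ∈ F(x), g(y) ∈ F(y) with |g(x) − g(y)| ≤ ρ(x,y). Define F¹(x) = ⋂_{z∈M} ( F(z) + ρ(x,z)·[−1,1] ). Then F¹(x) ≠ ∅ for every x ∈ M, and the Hausdorff distance satisfies d_H(F¹(x), F¹(y)) ≤ ρ(x,y) for all x, y ∈ M. -/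
/-!
Writing `F(x) = [a x, b x]`, the refinement `F¹(x)` is the interval `[A x, B x]` with
`A x = sup_z (a z - ρ x z)` and `B x = inf_z (b z + ρ x z)`. The selection hypothesis, combined
with the triangle inequality, gives `a z - ρ x z ≤ b w + ρ x w` for all `z, w`, hence `A x ≤ B x`.
Both envelopes are `1`-Lipschitz for `ρ`, being a supremum (infimum) of `1`-Lipschitz functions,
and the Hausdorff distance of two intervals is at most the larger of the distances between
their endpoints.
-/

open Set Metric

theorem Set.iInter_Icc_eq_Icc_ciSup_ciInf {α ι : Type*} [ConditionallyCompleteLattice α]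
    [Nonempty ι] {l u : ι → α} (hl : BddAbove (range l)) (hu : BddBelow (range u)) :
    ⋂ i, Icc (l i) (u i) = Icc (⨆ i, l i) (⨅ i, u i) := by
  ext x
  simp only [mem_iInter, mem_Icc, forall_and, ciSup_le_iff hl, le_ciInf_iff hu]

theorem Real.abs_ciSup_sub_ciSup_le {ι : Type*} [Nonempty ι] {f g : ι → ℝ} {c : ℝ}
    (hf : BddAbove (range f)) (hg : BddAbove (range g)) (h : ∀ i, |f i - g i| ≤ c) :
    |(⨆ i, f i) - ⨆ i, g i| ≤ c := by
  rw [abs_sub_le_iff, sub_le_iff_le_add, sub_le_iff_le_add]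
  constructor
  · exact ciSup_le fun i => by linarith [(abs_sub_le_iff.1 (h i)).1, le_ciSup hg i]
  · exact ciSup_le fun i => by linarith [(abs_sub_le_iff.1 (h i)).2, le_ciSup hf i]

theorem Real.abs_ciInf_sub_ciInf_le {ι : Type*} [Nonempty ι] {f g : ι → ℝ} {c : ℝ}
    (hf : BddBelow (range f)) (hg : BddBelow (range g)) (h : ∀ i, |f i - g i| ≤ c) :
    |(⨅ i, f i) - ⨅ i, g i| ≤ c := by
  rw [abs_sub_le_iff, sub_le_comm, sub_le_comm (a := ⨅ i, g i)]
  constructor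
  · exact le_ciInf fun i => by linarith [(abs_sub_le_iff.1 (h i)).1, ciInf_le hf i]
  · exact le_ciInf fun i => by linarith [(abs_sub_le_iff.1 (h i)).2, ciInf_le hg i]

theorem Real.exists_mem_Icc_dist_le {a b a' b' r u : ℝ} (hu : u ∈ Icc a b) (h' : a' ≤ b')
    (ha : |a - a'| ≤ r) (hb : |b - b'| ≤ r) : ∃ v ∈ Icc a' b', dist u v ≤ r := by
  refine ⟨max a' (min u b'), ⟨le_max_left _ _, max_le h' (min_le_right _ _)⟩, ?_⟩
  rw [Real.dist_eq, abs_le]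
  obtain ⟨hau, hub⟩ := hu
  obtain ⟨ha₁, ha₂⟩ := abs_le.1 ha
  obtain ⟨hb₁, hb₂⟩ := abs_le.1 hb
  constructor <;> rcases max_cases a' (min u b') with ⟨hmax, _⟩ | ⟨hmax, _⟩ <;>
    rcases min_cases u b' with ⟨hmin, _⟩ | ⟨hmin, _⟩ <;> linarith

theorem Real.hausdorffDist_Icc_le {a b a' b' r : ℝ} (h : a ≤ b) (h' : a' ≤ b')
    (ha : |a - a'| ≤ r) (hb : |b - b'| ≤ r) : hausdorffDist (Icc a b) (Icc a' b') ≤ r := by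
  refine hausdorffDist_le_of_mem_dist ((abs_nonneg _).trans ha)
    (fun u hu => Real.exists_mem_Icc_dist_le hu h' ha hb) fun u hu => ?_
  rw [abs_sub_comm] at ha hb
  exact Real.exists_mem_Icc_dist_le hu h ha hb

section Refinement

variable {M : Type*} {ρ : M → M → ℝ} {a b : M → ℝ}

theorem abs_sub_le_of_symm_of_triangle (hρsymm : ∀ x y, ρ x y = ρ y x)
    (hρtri : ∀ x y z, ρ x y ≤ ρ x z + ρ z y) (x y z : M) : |ρ x z - ρ y z| ≤ ρ x y := by
  rw [abs_sub_le_iff]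
  constructor
  · linarith [hρtri x z y]
  · linarith [hρtri y z x, hρsymm x y]

variable (hρsymm : ∀ x y, ρ x y = ρ y x) (hρtri : ∀ x y z, ρ x y ≤ ρ x z + ρ z y)
  (h : ∀ x y : M, ∃ gx ∈ Icc (a x) (b x), ∃ gy ∈ Icc (a y) (b y), |gx - gy| ≤ ρ x y)
include hρsymm hρtri h

theorem sub_le_add_of_selection (x z w : M) : a z - ρ x z ≤ b w + ρ x w := by
  obtain ⟨gz, ⟨hgz, -⟩, gw, ⟨-, hgw⟩, hle⟩ := h z w
  linarith [(abs_le.1 hle).2, hρtri z w x, hρsymm z x]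

theorem bddAbove_range_sub_of_selection (x : M) : BddAbove (range fun z => a z - ρ x z) :=
  ⟨b x + ρ x x, by rintro _ ⟨z, rfl⟩; exact sub_le_add_of_selection hρsymm hρtri h x z x⟩

theorem bddBelow_range_add_of_selection (x : M) : BddBelow (range fun z => b z + ρ x z) :=
  ⟨a x - ρ x x, by rintro _ ⟨z, rfl⟩; exact sub_le_add_of_selection hρsymm hρtri h x x z⟩

theorem iInter_Icc_eq_of_selection (x : M) :
    ⋂ z, Icc (a z - ρ x z) (b z + ρ x z) = Icc (⨆ z, (a z - ρ x z)) (⨅ z, (b z + ρ x z)) :=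
  have : Nonempty M := ⟨x⟩
  iInter_Icc_eq_Icc_ciSup_ciInf (bddAbove_range_sub_of_selection hρsymm hρtri h x)
    (bddBelow_range_add_of_selection hρsymm hρtri h x)

theorem ciSup_sub_le_ciInf_add_of_selection (x : M) :
    ⨆ z, (a z - ρ x z) ≤ ⨅ z, (b z + ρ x z) :=
  have : Nonempty M := ⟨x⟩
  ciSup_le fun z => le_ciInf fun w => sub_le_add_of_selection hρsymm hρtri h x z w

end Refinement

theorem stmt_9_general {M : Type*} (ρ : M → M → ℝ)
    (hρsymm : ∀ x y, ρ x y = ρ y x)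
    (hρtri : ∀ x y z, ρ x y ≤ ρ x z + ρ z y)
    (a b : M → ℝ)
    (h : ∀ x y : M, ∃ gx ∈ Set.Icc (a x) (b x), ∃ gy ∈ Set.Icc (a y) (b y),
      |gx - gy| ≤ ρ x y) :
    (∀ x : M, (⋂ z : M, Set.Icc (a z - ρ x z) (b z + ρ x z)).Nonempty) ∧
      (∀ x y : M,
        Metric.hausdorffDist (⋂ z : M, Set.Icc (a z - ρ x z) (b z + ρ x z))
          (⋂ z : M, Set.Icc (a z - ρ y z) (b z + ρ y z)) ≤ ρ x y) := by
  simp only [iInter_Icc_eq_of_selection hρsymm hρtri h]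
  refine ⟨fun x => nonempty_Icc.2 (ciSup_sub_le_ciInf_add_of_selection hρsymm hρtri h x),
    fun x y => ?_⟩
  have : Nonempty M := ⟨x⟩
  have hρ := abs_sub_le_of_symm_of_triangle hρsymm hρtri x y
  refine Real.hausdorffDist_Icc_le (ciSup_sub_le_ciInf_add_of_selection hρsymm hρtri h x)
    (ciSup_sub_le_ciInf_add_of_selection hρsymm hρtri h y) ?_ ?_
  · exact Real.abs_ciSup_sub_ciSup_le (bddAbove_range_sub_of_selection hρsymm hρtri h x)
      (bddAbove_range_sub_of_selection hρsymm hρtri h y)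
      fun z => by rw [sub_sub_sub_cancel_left, abs_sub_comm]; exact hρ z
  · exact Real.abs_ciInf_sub_ciInf_le (bddBelow_range_add_of_selection hρsymm hρtri h x)
      (bddBelow_range_add_of_selection hρsymm hρtri h y)
      fun z => by rw [add_sub_add_left_eq_sub]; exact hρ z

/-- **Proposition (X-1DIM)**: let `(M,ρ)` be a pseudometric space and `F(x) = [a(x), b(x)]`
nonempty compact intervals of `ℝ`. Suppose that for all `x, y` there are points
`g(x) ∈ F(x)`, `g(y) ∈ F(y)` with `|g(x) − g(y)| ≤ ρ(x,y)`. Then the balanced refinement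
`F¹(x) = ⋂_z (F(z) + ρ(x,z)·[−1,1])` is nonempty for every `x`, and
`d_H(F¹(x), F¹(y)) ≤ ρ(x,y)` for all `x, y`. -/
theorem stmt_9 {M : Type*} (ρ : M → M → ℝ)
    (hρself : ∀ x, ρ x x = 0) (hρsymm : ∀ x y, ρ x y = ρ y x)
    (hρtri : ∀ x y z, ρ x y ≤ ρ x z + ρ z y)
    (a b : M → ℝ) (hab : ∀ x, a x ≤ b x)
    (h : ∀ x y : M, ∃ gx ∈ Set.Icc (a x) (b x), ∃ gy ∈ Set.Icc (a y) (b y),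
      |gx - gy| ≤ ρ x y) :
    (∀ x : M, (⋂ z : M, Set.Icc (a z - ρ x z) (b z + ρ x z)).Nonempty) ∧
      (∀ x y : M,
        Metric.hausdorffDist (⋂ z : M, Set.Icc (a z - ρ x z) (b z + ρ x z))
          (⋂ z : M, Set.Icc (a z - ρ y z) (b z + ρ y z)) ≤ ρ x y) :=
  stmt_9_general ρ hρsymm hρtri a b h
end

section
/- Let X be a Banach space and let A₁, A₂ ⊆ X be nonempty convex closed bounded sets that are centrally symmetric with respect to points c₁ and c₂ respectively. Then ‖c₁ − c₂‖ ≤ d_H(A₁, A₂). -/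
/-!
Let `σᵢ x = 2cᵢ - x` be the point reflection in `cᵢ`; it is an isometry with `σᵢ '' Aᵢ = Aᵢ`.
Hence `d_H(A₁, σ₂ A₁) ≤ d_H(A₁, A₂) + d_H(σ₂ A₂, σ₂ A₁) = 2 d_H(A₁, A₂)`, and applying `σ₁`
turns the left side into `d_H(A₁, σ₁ σ₂ A₁)`, where `σ₁ σ₂` is the translation by `2 (c₁ - c₂)`.
A bounded nonempty set `A` is at Hausdorff distance at least `‖v‖` from its translate `v + A`:
by the triangle inequality `d_H(A, n v + A) ≤ n d_H(A, v + A)`, while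
`d_H(A, n v + A) ≥ n ‖v‖ - diam A`.
-/

open Bornology Function Metric Set
open scoped Pointwise

lemma le_of_forall_nat_mul_le_add {α : Type*} [Field α] [LinearOrder α] [IsStrictOrderedRing α]
    [Archimedean α] {a b C : α} (h : ∀ n : ℕ, n * a ≤ C + n * b) : a ≤ b := by
  by_contra! hba
  obtain ⟨n, hn⟩ := exists_nat_gt (C / (a - b))
  rw [div_lt_iff₀ (sub_pos.2 hba)] at hn
  linarith [h n]

lemma Function.Involutive.image_eq_self_of_mapsTo {α : Type*} {f : α → α} {s : Set α}
    (hf : Involutive f) (h : MapsTo f s s) : f '' s = s :=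
  h.image_subset.antisymm fun x hx => ⟨f x, h hx, hf x⟩

lemma image_sub_left_image_sub_left {G : Type*} [AddCommGroup G] (c₁ c₂ : G) (s : Set G) :
    (c₁ + c₁ - ·) '' ((c₂ + c₂ - ·) '' s) = (2 • (c₁ - c₂)) +ᵥ s := by
  rw [image_image, ← image_vadd]
  congr 1
  funext x
  simp only [vadd_eq_add, two_nsmul]
  abel

namespace Metric

lemma hausdorffDist_image_le_two_mul_of_image_eq {X : Type*} [PseudoMetricSpace X] {Φ : X → X}
    {s t : Set X} (hΦ : Isometry Φ) (ht : Φ '' t = t) (hst : hausdorffEDist s t ≠ ⊤) :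
    hausdorffDist s (Φ '' s) ≤ 2 * hausdorffDist s t := by
  calc hausdorffDist s (Φ '' s) ≤ hausdorffDist s t + hausdorffDist t (Φ '' s) :=
        hausdorffDist_triangle hst
    _ = hausdorffDist s t + hausdorffDist (Φ '' s) (Φ '' t) := by
        rw [ht, hausdorffDist_comm (s := t)]
    _ = 2 * hausdorffDist s t := by rw [hausdorffDist_image hΦ]; ring

section IsometricVAdd

variable {G X : Type*} [AddMonoid G] [PseudoMetricSpace X] [AddAction G X] [IsIsometricVAdd G X]

lemma hausdorffDist_vadd_vadd (g : G) (s t : Set X) :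
    hausdorffDist (g +ᵥ s) (g +ᵥ t) = hausdorffDist s t := by
  simpa only [image_vadd] using hausdorffDist_image (isometry_vadd X g)

lemma hausdorffDist_nsmul_vadd_le {s : Set X} (hs : IsBounded s) (hne : s.Nonempty) (g : G)
    (n : ℕ) : hausdorffDist s ((n • g) +ᵥ s) ≤ n * hausdorffDist s (g +ᵥ s) := by
  induction n with
  | zero => simp
  | succ n ih =>
    have hfin : hausdorffEDist s (g +ᵥ s) ≠ ⊤ :=
      hausdorffEDist_ne_top_of_nonempty_of_bounded hne hne.vadd_set hs (hs.vadd g)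
    calc hausdorffDist s ((n + 1) • g +ᵥ s)
        ≤ hausdorffDist s (g +ᵥ s) + hausdorffDist (g +ᵥ s) (g +ᵥ (n • g +ᵥ s)) := by
          rw [succ_nsmul', vadd_vadd]
          exact hausdorffDist_triangle hfin
      _ ≤ (n + 1 : ℕ) * hausdorffDist s (g +ᵥ s) := by
          rw [hausdorffDist_vadd_vadd]; push_cast; linarith

end IsometricVAdd

lemma norm_le_hausdorffDist_vadd {E : Type*} [SeminormedAddCommGroup E] [NormedSpace ℝ E]
    {s : Set E} (hs : IsBounded s) (hne : s.Nonempty) (v : E) :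
    ‖v‖ ≤ hausdorffDist s (v +ᵥ s) := by
  have ⟨a, ha⟩ := hne
  refine le_of_forall_nat_mul_le_add (C := diam s) fun n => ?_
  have hfin : hausdorffEDist (n • v +ᵥ s) s ≠ ⊤ :=
    hausdorffEDist_ne_top_of_nonempty_of_bounded hne.vadd_set hne (hs.vadd _) hs
  calc n * ‖v‖ = dist (n • v + a) a := by
        rw [dist_add_self_left, ← Nat.cast_smul_eq_nsmul ℝ, norm_smul, Real.norm_natCast]
    _ ≤ infDist (n • v + a) s + diam s := dist_le_infDist_add_diam hs ha
    _ ≤ hausdorffDist (n • v +ᵥ s) s + diam s := by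
        gcongr
        exact infDist_le_hausdorffDist_of_mem (vadd_mem_vadd_set ha) hfin
    _ ≤ diam s + n * hausdorffDist s (v +ᵥ s) := by
        rw [hausdorffDist_comm]; linarith [hausdorffDist_nsmul_vadd_le hs hne v n]

end Metric

theorem stmt_11_general {X : Type*} [NormedAddCommGroup X] [NormedSpace ℝ X]
    (A₁ A₂ : Set X)
    (h₁ne : A₁.Nonempty)
    (h₁bdd : Bornology.IsBounded A₁)
    (h₂ne : A₂.Nonempty)
    (h₂bdd : Bornology.IsBounded A₂)
    (c₁ c₂ : X)
    (h₁sym : ∀ x ∈ A₁, c₁ + c₁ - x ∈ A₁) (h₂sym : ∀ x ∈ A₂, c₂ + c₂ - x ∈ A₂) :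
    ‖c₁ - c₂‖ ≤ Metric.hausdorffDist A₁ A₂ := by
  have hA₁ : (c₁ + c₁ - ·) '' A₁ = A₁ := Involutive.image_eq_self_of_mapsTo (sub_sub_cancel _) h₁sym
  have hA₂ : (c₂ + c₂ - ·) '' A₂ = A₂ := Involutive.image_eq_self_of_mapsTo (sub_sub_cancel _) h₂sym
  suffices 2 * ‖c₁ - c₂‖ ≤ 2 * hausdorffDist A₁ A₂ by linarith
  calc 2 * ‖c₁ - c₂‖ = ‖2 • (c₁ - c₂)‖ := by
        rw [← Nat.cast_smul_eq_nsmul ℝ, norm_smul]; norm_num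
    _ ≤ hausdorffDist A₁ (2 • (c₁ - c₂) +ᵥ A₁) := norm_le_hausdorffDist_vadd h₁bdd h₁ne _
    _ = hausdorffDist ((c₁ + c₁ - ·) '' A₁) ((c₁ + c₁ - ·) '' ((c₂ + c₂ - ·) '' A₁)) := by
        rw [hA₁, image_sub_left_image_sub_left]
    _ = hausdorffDist A₁ ((c₂ + c₂ - ·) '' A₁) :=
        hausdorffDist_image (IsometryEquiv.subLeft (c₁ + c₁)).isometry
    _ ≤ 2 * hausdorffDist A₁ A₂ :=
        hausdorffDist_image_le_two_mul_of_image_eq (IsometryEquiv.subLeft (c₂ + c₂)).isometry hA₂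
          (hausdorffEDist_ne_top_of_nonempty_of_bounded h₁ne h₂ne h₁bdd h₂bdd)

/-- **Lemma (SYM)(ii)**: let `A₁, A₂` be nonempty convex closed bounded subsets of a Banach
space `X` which are centrally symmetric with respect to points `c₁` and `c₂` respectively
(i.e. the reflection `x ↦ 2c − x` maps the set onto itself). Then
`‖c₁ − c₂‖ ≤ d_H(A₁, A₂)`. -/
theorem stmt_11 {X : Type*} [NormedAddCommGroup X] [NormedSpace ℝ X] [CompleteSpace X]
    (A₁ A₂ : Set X)
    (h₁ne : A₁.Nonempty) (h₁conv : Convex ℝ A₁) (h₁cl : IsClosed A₁)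
    (h₁bdd : Bornology.IsBounded A₁)
    (h₂ne : A₂.Nonempty) (h₂conv : Convex ℝ A₂) (h₂cl : IsClosed A₂)
    (h₂bdd : Bornology.IsBounded A₂)
    (c₁ c₂ : X)
    (h₁sym : ∀ x ∈ A₁, c₁ + c₁ - x ∈ A₁) (h₂sym : ∀ x ∈ A₂, c₂ + c₂ - x ∈ A₂) :
    ‖c₁ - c₂‖ ≤ Metric.hausdorffDist A₁ A₂ :=
  stmt_11_general A₁ A₂ h₁ne h₁bdd h₂ne h₂bdd c₁ c₂ h₁sym h₂sym
end

section
/- For a Euclidean (Hilbert) space X and β ∈ [0,1), the modulus of squareness satisfies ξ_X(β) = (1 − β²)^{−1/2}. That is, sup{ ‖x − z(x,y)‖ / (‖x‖ − 1) : x, y ∈ X, ‖y‖ ≤ β < 1 < ‖x‖ } = (1 − β²)^{−1/2}, where z(x,y) is the unique point of norm 1 on the segment [x,y]. -/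
/-!
If `‖z‖ = 1` and `‖y‖ ≤ β < 1`, then `⟪z, z - y⟫ ≥ √(1 - β²) ‖z - y‖`: the direction from `y`
to `z` makes an angle with `z` whose cosine is at least `√(1 - β²)`. Since `x` lies on the ray
from `y` through `z`, beyond `z`, the vector `d = x - z` satisfies the same cone condition, and
expanding `‖z + d‖²` gives `‖x‖ ≥ 1 + √(1 - β²) ‖x - z‖`.

The bound is attained in the limit: as `dim X ≥ 2`, there are unit vectors `u, e` with
`⟪u, e⟫ = √(1 - β²)`. With `y = u - √(1 - β²) e` (of norm `β`) and `x = u + t e`, the ratio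
`t / (‖u + t e‖ - 1)` tends, as `t → 0⁺`, to the reciprocal of the derivative of
`t ↦ ‖u + t e‖` at `0`, which is `⟪u, e⟫`.
-/

open scoped RealInnerProductSpace
open Filter Topology

section

variable {X : Type*} [NormedAddCommGroup X] [InnerProductSpace ℝ X]

theorem sqrt_one_sub_sq_mul_norm_sub_le_inner {y z : X} (hz : ‖z‖ = 1) (hy : ‖y‖ ≤ 1) :
    √(1 - ‖y‖ ^ 2) * ‖z - y‖ ≤ ⟪z, z - y⟫ := by
  have hp : |⟪z, y⟫| ≤ ‖y‖ := by simpa [hz] using abs_real_inner_le_norm z y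
  have hinner : ⟪z, z - y⟫ = 1 - ⟪z, y⟫ := by
    rw [inner_sub_right, real_inner_self_eq_norm_sq, hz, one_pow]
  have hnorm : ‖z - y‖ ^ 2 = 1 - 2 * ⟪z, y⟫ + ‖y‖ ^ 2 := by
    rw [norm_sub_sq_real, hz]; ring
  -- `(1 - p)² - (1 - ‖y‖²)(1 - 2p + ‖y‖²) = (p - ‖y‖²)²` with `p = ⟪z, y⟫`
  have hsq : (√(1 - ‖y‖ ^ 2) * ‖z - y‖) ^ 2 ≤ ⟪z, z - y⟫ ^ 2 := by
    rw [mul_pow, Real.sq_sqrt (by nlinarith [norm_nonneg y]), hnorm, hinner]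
    nlinarith [sq_nonneg (⟪z, y⟫ - ‖y‖ ^ 2)]
  exact (abs_le_of_sq_le_sq' hsq (by rw [hinner]; linarith [(abs_le.mp hp).2])).2

theorem one_add_mul_norm_le_norm_add {r : ℝ} (hr : 0 ≤ r) {z d : X} (hz : ‖z‖ = 1)
    (h : r * ‖d‖ ≤ ⟪z, d⟫) : 1 + r * ‖d‖ ≤ ‖z + d‖ := by
  have hrd : r * ‖d‖ ≤ ‖d‖ := h.trans (by simpa [hz] using real_inner_le_norm z d)
  have hsq : ‖z + d‖ ^ 2 = 1 + 2 * ⟪z, d⟫ + ‖d‖ ^ 2 := by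
    rw [norm_add_sq_real, hz]; ring
  refine le_of_sq_le_sq ?_ (norm_nonneg _)
  nlinarith [mul_nonneg hr (norm_nonneg d)]

theorem norm_sub_div_norm_sub_one_le {β : ℝ} (hβ : β < 1) {x y z : X} (hy : ‖y‖ ≤ β)
    (hx : 1 < ‖x‖) (hz : ‖z‖ = 1) (hseg : z ∈ segment ℝ x y) :
    ‖x - z‖ / (‖x‖ - 1) ≤ 1 / √(1 - β ^ 2) := by
  obtain ⟨a, b, ha, hb, hab, hzxy⟩ := hseg
  have ha0 : 0 < a := by
    refine ha.lt_of_ne fun ha0 => ?_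
    obtain rfl : y = z := by rw [← hzxy, ← ha0, show b = 1 by linarith]; simp
    linarith
  have hr : 0 < √(1 - β ^ 2) := Real.sqrt_pos.mpr (by nlinarith [norm_nonneg y])
  have hd : x - z = (b / a) • (z - y) := by
    rw [← hzxy, show b = 1 - a by linarith]
    match_scalars
    · field_simp
    · field_simp; ring
  have hcone : √(1 - β ^ 2) * ‖x - z‖ ≤ ⟪z, x - z⟫ := by
    have hβy : √(1 - β ^ 2) ≤ √(1 - ‖y‖ ^ 2) :=
      Real.sqrt_le_sqrt (by nlinarith [norm_nonneg y])
    rw [hd, norm_smul, real_inner_smul_right, Real.norm_of_nonneg (by positivity), mul_left_comm]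
    exact mul_le_mul_of_nonneg_left ((mul_le_mul_of_nonneg_right hβy (norm_nonneg _)).trans
      (sqrt_one_sub_sq_mul_norm_sub_le_inner hz (hy.trans hβ.le))) (by positivity)
  have hxz := one_add_mul_norm_le_norm_add hr.le hz hcone
  rw [add_sub_cancel] at hxz
  rw [div_le_div_iff₀ (by linarith) hr]
  linarith

theorem exists_norm_eq_one_inner_eq_zero (hdim : 2 ≤ Module.rank ℝ X) :
    ∃ u v : X, ‖u‖ = 1 ∧ ‖v‖ = 1 ∧ ⟪u, v⟫ = 0 := by
  have : Nontrivial X := rank_pos_iff_nontrivial.mp (lt_of_lt_of_le (by norm_num) hdim)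
  obtain ⟨u, hu⟩ := exists_ne (0 : X)
  have hspan : (ℝ ∙ u) ≠ ⊤ := fun h => by
    have : Module.rank ℝ (ℝ ∙ u) ≤ 1 := by simpa using rank_span_le (R := ℝ) ({u} : Set X)
    rw [h, rank_top] at this
    exact absurd (hdim.trans this) (by norm_num)
  obtain ⟨v, hv_mem, hv⟩ := Submodule.exists_mem_ne_zero_of_ne_bot
    (mt Submodule.orthogonal_eq_bot_iff.mp hspan)
  refine ⟨(‖u‖⁻¹ : ℝ) • u, (‖v‖⁻¹ : ℝ) • v, norm_smul_inv_norm hu, norm_smul_inv_norm hv, ?_⟩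
  rw [real_inner_smul_left, real_inner_smul_right,
    hv_mem u (Submodule.mem_span_singleton_self u), mul_zero, mul_zero]

theorem exists_norm_eq_one_inner_eq (hdim : 2 ≤ Module.rank ℝ X) {r : ℝ} (hr : |r| ≤ 1) :
    ∃ u e : X, ‖u‖ = 1 ∧ ‖e‖ = 1 ∧ ⟪u, e⟫ = r := by
  obtain ⟨u, v, hu, hv, huv⟩ := exists_norm_eq_one_inner_eq_zero hdim
  have hs : √(1 - r ^ 2) ^ 2 = 1 - r ^ 2 := Real.sq_sqrt (by nlinarith [abs_le.mp hr])
  refine ⟨u, r • u + √(1 - r ^ 2) • v, hu, ?_, ?_⟩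
  · rw [← pow_eq_one_iff_of_nonneg (norm_nonneg _) two_ne_zero, norm_add_sq_real,
      real_inner_smul_left, real_inner_smul_right, huv, norm_smul, norm_smul, hu, hv,
      mul_pow, mul_pow, Real.norm_eq_abs, Real.norm_eq_abs, sq_abs, sq_abs, hs]
    ring
  · rw [inner_add_right, real_inner_smul_right, real_inner_smul_right, huv,
      real_inner_self_eq_norm_sq, hu]
    ring

theorem norm_sub_smul_sq_of_inner_eq {u e : X} {r : ℝ} (hu : ‖u‖ = 1) (he : ‖e‖ = 1)
    (hue : ⟪u, e⟫ = r) : ‖u - r • e‖ ^ 2 = 1 - r ^ 2 := by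
  rw [norm_sub_sq_real, real_inner_smul_right, hue, norm_smul, he, hu, mul_one, Real.norm_eq_abs,
    sq_abs]
  ring

theorem mem_segment_add_smul_sub_smul (u e : X) {t r : ℝ} (ht : 0 ≤ t) (hr : 0 ≤ r)
    (htr : 0 < t + r) : u ∈ segment ℝ (u + t • e) (u - r • e) := by
  have hrt : r + t ≠ 0 := by linarith
  refine mem_segment_iff_div.mpr ⟨r, t, hr, ht, by linarith, ?_⟩
  match_scalars
  · field_simp
  · field_simp; ring

theorem hasDerivAt_norm_add_smul {u : X} (hu : u ≠ 0) (e : X) :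
    HasDerivAt (fun t : ℝ => ‖u + t • e‖) (⟪u, e⟫ / ‖u‖) 0 := by
  have h := (((hasDerivAt_id (0 : ℝ)).smul_const e).const_add u).norm_sq.sqrt (by simp [hu])
  simp only [id, zero_smul, add_zero, one_smul, Real.sqrt_sq (norm_nonneg _)] at h
  convert h using 1
  field_simp

theorem tendsto_div_norm_add_smul_sub_one {u e : X} (hu : ‖u‖ = 1) (he : ⟪u, e⟫ ≠ 0) :
    Tendsto (fun t : ℝ => t / (‖u + t • e‖ - 1)) (𝓝[>] 0) (𝓝 ⟪u, e⟫⁻¹) := by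
  have hslope := hasDerivAt_iff_tendsto_slope.mp
    (hasDerivAt_norm_add_smul (norm_ne_zero_iff.mp (hu ▸ one_ne_zero)) e)
  rw [hu, div_one] at hslope
  refine ((hslope.inv₀ he).mono_left (nhdsGT_le_nhdsNE 0)).congr fun t => ?_
  simp [slope_def_field, hu]

end

/-- **Modulus of squareness of a Euclidean space**: for a real inner product space `X` of
dimension at least `2` and `β ∈ [0,1)`,
`ξ_X(β) = sup { ‖x − z‖/(‖x‖ − 1) : ‖y‖ ≤ β < 1 < ‖x‖, z ∈ [x,y], ‖z‖ = 1 } = (1 − β²)^{-1/2}`. -/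
theorem stmt_14 {X : Type*} [NormedAddCommGroup X] [InnerProductSpace ℝ X]
    (hdim : 2 ≤ Module.rank ℝ X) (β : ℝ) (h0 : 0 ≤ β) (h1 : β < 1) :
    sSup {ω : ℝ | ∃ x y z : X, ‖y‖ ≤ β ∧ 1 < ‖x‖ ∧ z ∈ segment ℝ x y ∧ ‖z‖ = 1 ∧
        ω = ‖x - z‖ / (‖x‖ - 1)} = 1 / Real.sqrt (1 - β ^ 2) := by
  set r := √(1 - β ^ 2)
  have hr : 0 < r := Real.sqrt_pos.mpr (by nlinarith)
  have hr2 : r ^ 2 = 1 - β ^ 2 := Real.sq_sqrt (by nlinarith)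
  obtain ⟨u, e, hu, he, hue⟩ :=
    exists_norm_eq_one_inner_eq hdim (r := r) (abs_le.mpr ⟨by linarith, by nlinarith⟩)
  have hy : ‖u - r • e‖ = β := (sq_eq_sq₀ (norm_nonneg _) h0).mp <| by
    rw [norm_sub_smul_sq_of_inner_eq hu he hue, hr2]; ring
  set S := {ω : ℝ | ∃ x y z : X, ‖y‖ ≤ β ∧ 1 < ‖x‖ ∧ z ∈ segment ℝ x y ∧ ‖z‖ = 1 ∧
    ω = ‖x - z‖ / (‖x‖ - 1)}
  have hub : 1 / r ∈ upperBounds S := by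
    rintro _ ⟨x, y, z, hy, hx, hseg, hz, rfl⟩
    exact norm_sub_div_norm_sub_one_le h1 hy hx hz hseg
  have hlim := tendsto_div_norm_add_smul_sub_one hu (hue ▸ hr.ne')
  rw [hue, ← one_div] at hlim
  have hcl : 1 / r ∈ closure S := by
    refine mem_closure_of_tendsto hlim ?_
    filter_upwards [self_mem_nhdsWithin] with t (ht : 0 < t)
    have hte : ‖t • e‖ = t := by rw [norm_smul, he, mul_one, Real.norm_of_nonneg ht.le]
    have hx := one_add_mul_norm_le_norm_add hr.le hu
      (by rw [hte, real_inner_smul_right, hue, mul_comm])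
    exact ⟨u + t • e, u - r • e, u, hy.le, by nlinarith,
      mem_segment_add_smul_sub_smul u e ht.le hr.le (by linarith), hu,
      by rw [add_sub_cancel_left, hte]⟩
  exact (isLUB_of_mem_closure hub hcl).csSup_eq (closure_nonempty_iff.mp ⟨_, hcl⟩)
end

section
/- For every Banach space X and every β ∈ [0,1), the modulus of squareness satisfies ξ_X(β) ≤ (1 + β)/(1 − β). That is, if ‖y‖ ≤ β < 1 < ‖x‖ and z is the unique point of norm 1 on the segment [x,y], then ‖x − z‖ ≤ ((1+β)/(1−β))·(‖x‖ − 1). -/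
/-! If `z = (1 - t) • x + t • y`, then `‖x - z‖ = t ‖x - y‖ ≤ t (‖x‖ + ‖y‖)`, while convexity of
the norm gives `‖x‖ - ‖z‖ ≥ t (‖x‖ - ‖y‖)`. Eliminating `t` bounds `‖x - z‖` by
`(‖x‖ + ‖y‖) / (‖x‖ - ‖y‖) · (‖x‖ - ‖z‖)`, and this ratio is at most `(1 + β) / (1 - β)` once
`‖y‖ ≤ β < 1 ≤ ‖x‖`. -/

theorem norm_sub_le_div_mul_of_mem_segment {E : Type*} [SeminormedAddCommGroup E]
    [NormedSpace ℝ E] {x y z : E} (hz : z ∈ segment ℝ x y) (hyx : ‖y‖ < ‖x‖) :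
    ‖x - z‖ ≤ (‖x‖ + ‖y‖) / (‖x‖ - ‖y‖) * (‖x‖ - ‖z‖) := by
  obtain ⟨a, t, ha, ht, hat, rfl⟩ := hz
  obtain rfl : a = 1 - t := eq_sub_of_add_eq hat
  have hxz : ‖x - ((1 - t) • x + t • y)‖ = t * ‖x - y‖ := by
    rw [show x - ((1 - t) • x + t • y) = t • (x - y) by module,
      norm_smul, Real.norm_of_nonneg ht]
  have hz_le : ‖(1 - t) • x + t • y‖ ≤ (1 - t) * ‖x‖ + t * ‖y‖ := by
    simpa only [norm_smul, Real.norm_of_nonneg ha, Real.norm_of_nonneg ht]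
      using norm_add_le ((1 - t) • x) (t • y)
  have hgap : 0 < ‖x‖ - ‖y‖ := sub_pos.2 hyx
  calc ‖x - ((1 - t) • x + t • y)‖ ≤ t * (‖x‖ + ‖y‖) := by
        rw [hxz]; gcongr; exact norm_sub_le x y
    _ = (‖x‖ + ‖y‖) / (‖x‖ - ‖y‖) * (t * (‖x‖ - ‖y‖)) := by field_simp
    _ ≤ (‖x‖ + ‖y‖) / (‖x‖ - ‖y‖) * (‖x‖ - ‖(1 - t) • x + t • y‖) := by
        gcongr
        linarith

theorem add_div_sub_le_one_add_div_one_sub {r s β : ℝ} (hs : 0 ≤ s) (hsβ : s ≤ β)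
    (hβ : β < 1) (hr : 1 ≤ r) :
    (r + s) / (r - s) ≤ (1 + β) / (1 - β) := by
  rw [div_le_div_iff₀ (by linarith) (by linarith)]
  nlinarith [mul_nonneg hs (sub_nonneg.2 hr), mul_nonneg (sub_nonneg.2 hsβ) (by linarith : 0 ≤ r)]

theorem stmt_15_general {X : Type*} [NormedAddCommGroup X] [NormedSpace ℝ X]
    (β : ℝ) (h1 : β < 1)
    (x y z : X) (hy : ‖y‖ ≤ β) (hx : 1 < ‖x‖) (hz : z ∈ segment ℝ x y) (hz1 : ‖z‖ = 1) :
    ‖x - z‖ ≤ (1 + β) / (1 - β) * (‖x‖ - 1) := by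
  calc ‖x - z‖ ≤ (‖x‖ + ‖y‖) / (‖x‖ - ‖y‖) * (‖x‖ - ‖z‖) :=
        norm_sub_le_div_mul_of_mem_segment hz (by linarith)
    _ ≤ (1 + β) / (1 - β) * (‖x‖ - 1) := by
        rw [hz1]
        exact mul_le_mul_of_nonneg_right
          (add_div_sub_le_one_add_div_one_sub (norm_nonneg y) hy h1 hx.le) (by linarith)

/-- **Upper bound for the modulus of squareness of a Banach space** (Przesławski–Yost):
for every `β ∈ [0,1)`, if `‖y‖ ≤ β < 1 < ‖x‖` and `z` is a point of norm `1` on the segment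
`[x,y]`, then `‖x − z‖ ≤ ((1+β)/(1−β))·(‖x‖ − 1)`; hence `ξ_X(β) ≤ (1+β)/(1−β)`. -/
theorem stmt_15 {X : Type*} [NormedAddCommGroup X] [NormedSpace ℝ X]
    (β : ℝ) (h0 : 0 ≤ β) (h1 : β < 1)
    (x y z : X) (hy : ‖y‖ ≤ β) (hx : 1 < ‖x‖) (hz : z ∈ segment ℝ x y) (hz1 : ‖z‖ = 1) :
    ‖x - z‖ ≤ (1 + β) / (1 - β) * (‖x‖ - 1) :=
  stmt_15_general β h1 x y z hy hx hz hz1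
end

section
/- Let (M, ρ) be a pseudometric space, X a Banach space, and F : M → 𝒦₁(X) a map into nonempty compact convex subsets of X of dimension at most 1 (points and closed segments). Let λ > 0 and suppose that for every subset M' ⊆ M with at most 4 points, F restricted to M' has a selection f' (f'(x) ∈ F(x) on M') with ‖f'(x) − f'(y)‖ ≤ λ·ρ(x,y) on M'. Then F has a selection f : M → X with ‖f(x) − f(y)‖ ≤ 15λ·ρ(x,y) for all x, y ∈ M. -/
/-!
Write `r = λ ρ`. Let `F₁ x` be the points of the segment `F x` within `r x y` of every `F y`, and
`F₂ x` the points of `F₁ x` within `3 r x y` of every `F₁ y`. Helly's theorem on the segment `F x` together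
with the three-point condition makes `F₁ x` nonempty, and Helly's theorem on the square
`F x × F y` together with the four-point condition gives points of `F₁ x` and `F₁ y` at distance
at most `r x y`. Ordering three such points on the segment `F x` shows that `F₂ x` is nonempty,
and a walk along the segment `F₁ y` shows that every point of `F₂ x` lies within `15 r x y` of
`F₂ y`. Since `F₂ x` is again a segment and the midpoint of a segment is `1`-Lipschitz for the
Hausdorff distance, the midpoints of the `F₂ x` form a `15 r`-Lipschitz selection.
-/

open Set Metric Module
open scoped Finset

section Helly

theorem nonempty_biInter_of_forall_fin {ι α : Type*} [Nonempty α] {s : ι → Set α} {n : ℕ}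
    (h : ∀ f : Fin n → ι, (⋂ k, s (f k)).Nonempty) {I : Finset ι} (hI : #I ≤ n) :
    (⋂ i ∈ I, s i).Nonempty := by
  rcases I.eq_empty_or_nonempty with rfl | ⟨i₀, -⟩
  · simp
  obtain ⟨p, hp⟩ := h fun k => I.toList.getD k i₀
  refine ⟨p, mem_iInter₂.2 fun i hi => ?_⟩
  obtain ⟨k, hk, rfl⟩ := List.getElem_of_mem (Finset.mem_toList.2 hi)
  have hkn : k < n := hk.trans_le (by simpa using hI)
  simpa [List.getElem?_eq_getElem hk] using mem_iInter.1 hp ⟨k, hkn⟩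

variable {ι E F : Type*} [NormedAddCommGroup E] [NormedSpace ℝ E] [FiniteDimensional ℝ E]
  [NormedAddCommGroup F] [NormedSpace ℝ F]

/-- Helly's theorem, pulled back along `g`. -/
theorem nonempty_iInter_of_subset_image_affineMap (g : E →ᵃ[ℝ] F) {K : Set E} (hK : IsCompact K)
    (hKc : Convex ℝ K) {C : ι → Set F} (hC : ∀ i, Convex ℝ (C i)) (hCcl : ∀ i, IsClosed (C i))
    (hCK : ∀ i, C i ⊆ g '' K) {n : ℕ} (hn : finrank ℝ E + 1 ≤ n)
    (h : ∀ f : Fin n → ι, (⋂ k, C (f k)).Nonempty) : (⋂ i, C i).Nonempty := by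
  have hpull (f : Fin n → ι) : (⋂ k, K ∩ g ⁻¹' C (f k)).Nonempty := by
    obtain ⟨p, hp⟩ := h f
    obtain ⟨e, heK, rfl⟩ := hCK (f ⟨0, by omega⟩) (mem_iInter.1 hp _)
    exact ⟨e, mem_iInter.2 fun k => ⟨heK, mem_iInter.1 hp k⟩⟩
  obtain ⟨e, he⟩ := Convex.helly_theorem_compact' (𝕜 := ℝ) (F := fun i => K ∩ g ⁻¹' C i)
    (fun i => hKc.inter ((hC i).affine_preimage g))
    (fun i => hK.inter_right ((hCcl i).preimage g.continuous_of_finiteDimensional))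
    fun I hI => nonempty_biInter_of_forall_fin hpull (hI.trans hn)
  exact ⟨g e, mem_iInter.2 fun i => (mem_iInter.1 he i).2⟩

theorem nonempty_iInter_of_subset_segment {a b : F} {C : ι → Set F} (hC : ∀ i, Convex ℝ (C i))
    (hCcl : ∀ i, IsClosed (C i)) (hCab : ∀ i, C i ⊆ segment ℝ a b)
    (h : ∀ i j, (C i ∩ C j).Nonempty) : (⋂ i, C i).Nonempty := by
  refine nonempty_iInter_of_subset_image_affineMap (AffineMap.lineMap a b) isCompact_Icc
    (convex_Icc 0 1) hC hCcl (fun i => segment_eq_image_lineMap ℝ a b ▸ hCab i) (n := 2)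
    (by simp) fun f => ?_
  obtain ⟨p, hp₀, hp₁⟩ := h (f 0) (f 1)
  exact ⟨p, mem_iInter.2 (Fin.forall_fin_two.2 ⟨hp₀, hp₁⟩)⟩

theorem nonempty_iInter_of_subset_segment_prod {a b a' b' : F} {C : ι → Set (F × F)}
    (hC : ∀ i, Convex ℝ (C i)) (hCcl : ∀ i, IsClosed (C i))
    (hCab : ∀ i, C i ⊆ segment ℝ a b ×ˢ segment ℝ a' b')
    (h : ∀ i j k, (C i ∩ C j ∩ C k).Nonempty) : (⋂ i, C i).Nonempty := by
  have himage : segment ℝ a b ×ˢ segment ℝ a' b' = (AffineMap.lineMap a b).prodMap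
      (AffineMap.lineMap a' b') '' (Icc (0 : ℝ) 1 ×ˢ Icc (0 : ℝ) 1) := by
    rw [segment_eq_image_lineMap, segment_eq_image_lineMap, ← Set.prodMap_image_prod]
    rfl
  refine nonempty_iInter_of_subset_image_affineMap _ (isCompact_Icc.prod isCompact_Icc)
    ((convex_Icc (0 : ℝ) 1).prod (convex_Icc (0 : ℝ) 1)) hC hCcl (fun i => himage ▸ hCab i) (n := 3)
    (by simp) fun f => ?_
  obtain ⟨p, ⟨hp₀, hp₁⟩, hp₂⟩ := h (f 0) (f 1) (f 2)
  exact ⟨p, mem_iInter.2 fun k => by fin_cases k <;> assumption⟩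

end Helly

theorem IsCompact.exists_dist_le_of_infDist_le {α : Type*} [PseudoMetricSpace α] {s : Set α}
    (hs : IsCompact s) (hne : s.Nonempty) {p : α} {c : ℝ} (h : infDist p s ≤ c) :
    ∃ q ∈ s, dist p q ≤ c := by
  obtain ⟨q, hq, hpq⟩ := hs.exists_infDist_eq_dist hne p
  exact ⟨q, hq, hpq ▸ h⟩

theorem IsClosed.sep_infDist_le {α : Type*} [PseudoMetricSpace α] {s : Set α} (hs : IsClosed s)
    (t : Set α) (c : ℝ) : IsClosed {p ∈ s | infDist p t ≤ c} :=
  hs.inter (_root_.isClosed_le (continuous_infDist_pt t) continuous_const)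

section Segments

variable {X : Type*} [NormedAddCommGroup X] [NormedSpace ℝ X]

theorem convexOn_infDist {s : Set X} (hs : Convex ℝ s) : ConvexOn ℝ univ (infDist · s) := by
  rcases s.eq_empty_or_nonempty with rfl | hne
  · simpa using convexOn_const (0 : ℝ) convex_univ
  refine ⟨convex_univ, fun p _ q _ a b ha hb hab => le_of_forall_pos_le_add fun ε hε => ?_⟩
  obtain ⟨p', hp', hpp'⟩ := (infDist_lt_iff hne).1 (lt_add_of_pos_right (infDist p s) hε)
  obtain ⟨q', hq', hqq'⟩ := (infDist_lt_iff hne).1 (lt_add_of_pos_right (infDist q s) hε)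
  calc infDist (a • p + b • q) s ≤ dist (a • p + b • q) (a • p' + b • q') :=
        infDist_le_dist_of_mem (hs hp' hq' ha hb hab)
    _ ≤ a * dist p p' + b * dist q q' := by
        refine (dist_add_add_le _ _ _ _).trans_eq ?_
        rw [dist_smul₀, dist_smul₀, Real.norm_of_nonneg ha, Real.norm_of_nonneg hb]
    _ ≤ a * (infDist p s + ε) + b * (infDist q s + ε) := by gcongr
    _ = a • infDist p s + b • infDist q s + ε := by
        simp only [smul_eq_mul]; linear_combination ε * hab

theorem Convex.sep_infDist_le {s t : Set X} (hs : Convex ℝ s) (ht : Convex ℝ t) (c : ℝ) :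
    Convex ℝ {p ∈ s | infDist p t ≤ c} :=
  ((convexOn_infDist ht).subset (subset_univ s) hs).convex_le c

theorem Wbtw.infDist_le_max {s : Set X} (hs : Convex ℝ s) {p q u : X} (h : Wbtw ℝ p q u) :
    infDist q s ≤ max (infDist p s) (infDist u s) :=
  (convexOn_infDist hs).le_on_segment (mem_univ p) (mem_univ u) (mem_segment_iff_wbtw.2 h)

theorem exists_wbtw_infDist_le {s : Set X} (hs : Convex ℝ s) {q w : X} {a b : ℝ}
    (hw : infDist w s ≤ a) (hab : a ≤ b) (hq : b < infDist q s) :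
    ∃ t, Wbtw ℝ q t w ∧ infDist t s ≤ b ∧
      (infDist q s - a) * dist t q = (infDist q s - b) * dist w q := by
  set g := infDist q s
  have hpos : 0 < g - a := by linarith
  set θ := (g - b) / (g - a)
  have hθ : θ * (g - a) = g - b := div_mul_cancel₀ _ hpos.ne'
  have hθ0 : 0 ≤ θ := div_nonneg (by linarith) hpos.le
  have hθ1 : θ ≤ 1 := (div_le_one hpos).2 (by linarith)
  refine ⟨AffineMap.lineMap q w θ, ⟨θ, ⟨hθ0, hθ1⟩, rfl⟩, ?_, ?_⟩
  · calc infDist (AffineMap.lineMap q w θ) s ≤ (1 - θ) • g + θ • infDist w s := by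
          rw [AffineMap.lineMap_apply_module]
          exact (convexOn_infDist hs).2 (mem_univ q) (mem_univ w) (by linarith) hθ0 (by ring)
      _ ≤ b := by simp only [smul_eq_mul]; nlinarith
  · rw [dist_lineMap_left, Real.norm_of_nonneg hθ0, dist_comm, ← mul_assoc, mul_comm _ θ, hθ]

theorem wbtw_or_wbtw_or_wbtw_of_mem_segment {a b p q u : X} (hp : p ∈ segment ℝ a b)
    (hq : q ∈ segment ℝ a b) (hu : u ∈ segment ℝ a b) :
    Wbtw ℝ p q u ∨ Wbtw ℝ q u p ∨ Wbtw ℝ u p q :=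
  (collinear_triple_of_mem_affineSpan_pair (mem_segment_iff_wbtw.1 hp).mem_affineSpan
    (mem_segment_iff_wbtw.1 hq).mem_affineSpan
    (mem_segment_iff_wbtw.1 hu).mem_affineSpan).wbtw_or_wbtw_or_wbtw

/-- By convexity of `infDist · C`, `q₀` cannot lie between `β` and `w₀`; so either `β` lies
between `q₀` and `t`, or `t` lies between `β` and `q₀`. -/
theorem exists_mem_dist_le_of_wbtw {S C : Set X} {a b q₀ β t w₀ : X} (hS : Convex ℝ S)
    (hC : Convex ℝ C) (hSab : S ⊆ segment ℝ a b) (hq₀ : q₀ ∈ S) (hβ : β ∈ S)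
    (ht : t ∈ segment ℝ a b) (htw₀ : Wbtw ℝ q₀ t w₀) (hβq₀ : infDist β C < infDist q₀ C)
    (hw₀q₀ : infDist w₀ C < infDist q₀ C) (htq₀ : infDist t C < infDist q₀ C) :
    ∃ q ∈ S, dist q q₀ ≤ dist t q₀ ∧ infDist q C ≤ max (infDist β C) (infDist t C) := by
  rcases wbtw_or_wbtw_or_wbtw_of_mem_segment (hSab hq₀) (hSab hβ) ht with h | h | h
  · refine ⟨β, hβ, ?_, le_max_left _ _⟩
    linarith [h.dist_add_dist, dist_nonneg (x := β) (y := t), dist_comm β q₀, dist_comm t q₀]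
  · exact ⟨t, hS.segment_subset hβ hq₀ (mem_segment_iff_wbtw.2 h), le_rfl, le_max_right _ _⟩
  · have hne : q₀ ≠ t := by rintro rfl; exact htq₀.false
    have := (h.symm.trans_expand_left htw₀ hne).infDist_le_max hC
    exact absurd this (not_le.2 (max_lt hβq₀ hw₀q₀))

theorem exists_eq_segment_of_subset_segment {C : Set X} {a b : X} (hne : C.Nonempty)
    (hC : Convex ℝ C) (hCcl : IsClosed C) (hCab : C ⊆ segment ℝ a b) :
    ∃ c d, C = segment ℝ c d := by
  set T := Icc (0 : ℝ) 1 ∩ AffineMap.lineMap a b ⁻¹' C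
  have hT : AffineMap.lineMap a b '' T = C := by
    refine (image_subset_iff.2 inter_subset_right).antisymm fun p hp => ?_
    obtain ⟨t, ht, rfl⟩ := (segment_eq_image_lineMap ℝ a b ▸ hCab) hp
    exact ⟨t, ⟨ht, hp⟩, rfl⟩
  have hTne : T.Nonempty := by rw [← hT] at hne; exact hne.of_image
  have hTIcc := eq_Icc_of_connected_compact
    (((convex_Icc 0 1).inter (hC.affine_preimage _)).isConnected hTne)
    (isCompact_Icc.inter_right (hCcl.preimage (AffineMap.lineMap_continuous)))
  refine ⟨AffineMap.lineMap a b (sInf T), AffineMap.lineMap a b (sSup T), ?_⟩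
  rw [← image_segment, segment_eq_Icc (nonempty_Icc.1 (hTIcc ▸ hTne)), ← hTIcc, hT]

theorem dist_midpoint_midpoint_le_of_segment {a b a' b' : X} {d : ℝ}
    (h : ∀ p ∈ segment ℝ a b, ∃ q ∈ segment ℝ a' b', dist p q ≤ d)
    (h' : ∀ q ∈ segment ℝ a' b', ∃ p ∈ segment ℝ a b, dist p q ≤ d) :
    dist (midpoint ℝ a b) (midpoint ℝ a' b') ≤ d := by
  obtain ⟨g, hg1, hg⟩ := exists_dual_vector'' ℝ (midpoint ℝ a b - midpoint ℝ a' b')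
  simp only [RCLike.ofReal_real_eq_id, id] at hg
  have hgle (p q : X) : g p ≤ g q + dist p q := by
    have := (le_abs_self _).trans ((g.le_opNorm (p - q)).trans
      (mul_le_of_le_one_left (norm_nonneg _) hg1))
    rw [map_sub] at this
    rw [dist_eq_norm]; linarith
  have hmax : ∀ p ∈ segment ℝ a b, g p ≤ max (g a') (g b') + d := by
    intro p hp
    obtain ⟨q, hq, hpq⟩ := h p hp
    have := (g.toLinearMap.convexOn convex_univ).le_on_segment (mem_univ a') (mem_univ b') hq
    simp only [ContinuousLinearMap.coe_coe] at this
    linarith [hgle p q]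
  have hmin : ∀ q ∈ segment ℝ a' b', min (g a) (g b) ≤ g q + d := by
    intro q hq
    obtain ⟨p, hp, hpq⟩ := h' q hq
    have := (g.toLinearMap.concaveOn convex_univ).ge_on_segment (mem_univ a) (mem_univ b) hp
    simp only [ContinuousLinearMap.coe_coe] at this
    linarith [hgle p q]
  have hmid (c e : X) : g (midpoint ℝ c e) = (g c + g e) / 2 := by
    rw [midpoint_eq_smul_add, map_smul, map_add, smul_eq_mul, invOf_eq_inv]; ring
  rw [dist_eq_norm, ← hg, map_sub, hmid, hmid]
  have hM : max (g a) (g b) ≤ max (g a') (g b') + d :=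
    max_le (hmax a (left_mem_segment ℝ a b)) (hmax b (right_mem_segment ℝ a b))
  have hm : min (g a) (g b) ≤ min (g a') (g b') + d := by
    rw [← min_add_add_right]
    exact le_min (hmin a' (left_mem_segment ℝ a' b')) (hmin b' (right_mem_segment ℝ a' b'))
  linarith [max_add_min (g a) (g b), max_add_min (g a') (g b')]

end Segments

namespace LipschitzSelection

variable {M X : Type*} [NormedAddCommGroup X]

def IsLipschitzSelectionOn (F : M → Set X) (r : M → M → ℝ) (s : Finset M) (f : M → X) : Prop :=
  (∀ x ∈ s, f x ∈ F x) ∧ ∀ x ∈ s, ∀ y ∈ s, ‖f x - f y‖ ≤ r x y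

/-- Shvartsman's balanced refinement of `G`, with `r x y` in the role of `λ ρ(x, y)`. -/
def balancedRefinement (G : M → Set X) (r : M → M → ℝ) (x : M) : Set X :=
  {p ∈ G x | ∀ y, infDist p (G y) ≤ r x y}

variable {F G : M → Set X} {r : M → M → ℝ}

namespace IsLipschitzSelectionOn

variable {s : Finset M} {f : M → X} (hf : IsLipschitzSelectionOn F r s f) {x y : M}
  (hx : x ∈ s) (hy : y ∈ s)
include hf hx hy

theorem nonneg : 0 ≤ r x y := (norm_nonneg _).trans (hf.2 x hx y hy)

theorem infDist_le : infDist (f x) (F y) ≤ r x y :=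
  (infDist_le_dist_of_mem (hf.1 y hy)).trans ((dist_eq_norm _ _).trans_le (hf.2 x hx y hy))

end IsLipschitzSelectionOn

theorem nonneg_of_fourPoint
    (hfin : ∀ s : Finset M, #s ≤ 4 → ∃ f, IsLipschitzSelectionOn F r s f) (x y : M) :
    0 ≤ r x y := by
  classical
  obtain ⟨f, hf⟩ := hfin {x, y} (Finset.card_le_two.trans (by norm_num))
  exact hf.nonneg (by simp) (by simp)

theorem balancedRefinement_subset (x : M) : balancedRefinement G r x ⊆ G x := sep_subset _ _

theorem isClosed_balancedRefinement {x : M} (hGx : IsClosed (G x)) :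
    IsClosed (balancedRefinement G r x) := by
  have : IsClosed {p | ∀ y, infDist p (G y) ≤ r x y} := by
    rw [ofPred_forall]
    exact isClosed_iInter fun y => isClosed_le (continuous_infDist_pt (G y)) continuous_const
  exact hGx.inter this

theorem isCompact_balancedRefinement {x : M} (hGx : IsCompact (G x)) :
    IsCompact (balancedRefinement G r x) :=
  hGx.of_isClosed_subset (isClosed_balancedRefinement hGx.isClosed) (balancedRefinement_subset x)

/-- The constraint sets on `(p, q) ∈ F x × F y` whose common points are the pairs
`p ∈ F₁ x`, `q ∈ F₁ y` with `‖p - q‖ ≤ r x y`. -/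
def pairConstraint (F : M → Set X) (r : M → M → ℝ) (x y : M) : Option (M ⊕ M) → Set (X × X)
  | none => {v ∈ F x ×ˢ F y | ‖v.1 - v.2‖ ≤ r x y}
  | some (.inl z) => {v ∈ F x ×ˢ F y | infDist v.1 (F z) ≤ r x z}
  | some (.inr w) => {v ∈ F x ×ˢ F y | infDist v.2 (F w) ≤ r y w}

theorem pairConstraint_subset (x y : M) (i : Option (M ⊕ M)) :
    pairConstraint F r x y i ⊆ F x ×ˢ F y := by
  rcases i with _ | _ | _ <;> exact sep_subset _ _

variable [NormedSpace ℝ X]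

def IsSegmentValued (F : M → Set X) : Prop := ∀ x, ∃ a b : X, F x = segment ℝ a b

namespace IsSegmentValued

variable (hF : IsSegmentValued F) (x : M)
include hF

theorem convex : Convex ℝ (F x) := by
  obtain ⟨a, b, h⟩ := hF x
  exact h ▸ convex_segment a b

theorem isCompact : IsCompact (F x) := by
  obtain ⟨a, b, h⟩ := hF x
  exact h ▸ segment_eq_image_lineMap ℝ a b ▸ isCompact_Icc.image AffineMap.lineMap_continuous

theorem nonempty : (F x).Nonempty := by
  obtain ⟨a, b, h⟩ := hF x
  exact h ▸ ⟨a, left_mem_segment ℝ a b⟩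

end IsSegmentValued

theorem convex_balancedRefinement (hG : ∀ y, Convex ℝ (G y)) (x : M) :
    Convex ℝ (balancedRefinement G r x) := fun p hp q hq _ _ ha hb hab =>
  ⟨hG x hp.1 hq.1 ha hb hab, fun y => ((convexOn_infDist (hG y)).convex_le (r x y)
    ⟨mem_univ p, hp.2 y⟩ ⟨mem_univ q, hq.2 y⟩ ha hb hab).2⟩

theorem balancedRefinement_inter_nonempty {x : M} {a b : X} {B : Set X}
    (hGab : G x ⊆ segment ℝ a b) (hGx : IsClosed (G x)) (hG : ∀ y, Convex ℝ (G y))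
    (hB : Convex ℝ B) (hBcl : IsClosed B) (hBC : ∀ y, ∃ p ∈ G x ∩ B, infDist p (G y) ≤ r x y)
    (hCC : ∀ y z, ∃ p ∈ G x, infDist p (G y) ≤ r x y ∧ infDist p (G z) ≤ r x z) :
    (balancedRefinement G r x ∩ B).Nonempty := by
  let C : Option M → Set X := fun o => o.elim (G x ∩ B) fun y => {p ∈ G x | infDist p (G y) ≤ r x y}
  have hpair : ∀ i j, (C i ∩ C j).Nonempty := by
    rintro (_ | y) (_ | z)
    · obtain ⟨p, hp, -⟩ := hBC x
      exact ⟨p, hp, hp⟩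
    · obtain ⟨p, hp, h⟩ := hBC z
      exact ⟨p, hp, hp.1, h⟩
    · obtain ⟨p, hp, h⟩ := hBC y
      exact ⟨p, ⟨hp.1, h⟩, hp⟩
    · obtain ⟨p, hp, hy, hz⟩ := hCC y z
      exact ⟨p, ⟨hp, hy⟩, hp, hz⟩
  obtain ⟨p, hp⟩ := nonempty_iInter_of_subset_segment (C := C)
    (by rintro (_ | y); exacts [(hG x).inter hB, (hG x).sep_infDist_le (hG y) _])
    (by rintro (_ | y); exacts [hGx.inter hBcl, hGx.sep_infDist_le _ _])
    (by rintro (_ | y); exacts [inter_subset_left.trans hGab, (sep_subset _ _).trans hGab]) hpair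
  have hp' := mem_iInter.1 hp
  exact ⟨p, ⟨(hp' none).1, fun y => (hp' (some y)).2⟩, (hp' none).2⟩

theorem balancedRefinement_nonempty {x : M} {a b : X} (hGab : G x ⊆ segment ℝ a b)
    (hGx : IsClosed (G x)) (hG : ∀ y, Convex ℝ (G y))
    (hCC : ∀ y z, ∃ p ∈ G x, infDist p (G y) ≤ r x y ∧ infDist p (G z) ≤ r x z) :
    (balancedRefinement G r x).Nonempty := by
  simpa using balancedRefinement_inter_nonempty hGab hGx hG convex_univ isClosed_univ
    (fun y => let ⟨p, hp, hy, _⟩ := hCC y y; ⟨p, ⟨hp, mem_univ p⟩, hy⟩) hCC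

section FinitenessPrinciple

variable (hF : IsSegmentValued F) (hsymm : ∀ x y, r x y = r y x)
  (htri : ∀ x y z, r x y ≤ r x z + r z y)
  (hfin : ∀ s : Finset M, #s ≤ 4 → ∃ f, IsLipschitzSelectionOn F r s f)

local notation "F₁" => balancedRefinement F r
local notation "F₂" => balancedRefinement F₁ (fun x y => 3 * r x y)

include hF hfin in
theorem balancedRefinement_nonempty_of_fourPoint (x : M) : (F₁ x).Nonempty := by
  classical
  obtain ⟨a, b, hab⟩ := hF x
  refine balancedRefinement_nonempty hab.subset (hF.isCompact x).isClosed hF.convex fun y z => ?_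
  obtain ⟨f, hf⟩ := hfin {x, y, z} (Finset.card_le_three.trans (by norm_num))
  exact ⟨f x, hf.1 x (by simp), hf.infDist_le (by simp) (by simp),
    hf.infDist_le (by simp) (by simp)⟩

include hF in
theorem convex_pairConstraint (x y : M) (i : Option (M ⊕ M)) :
    Convex ℝ (pairConstraint F r x y i) := by
  have hxy := (hF.convex x).prod (hF.convex y)
  rcases i with _ | z | w
  · exact (((convexOn_norm convex_univ).comp_linearMap
      (LinearMap.fst ℝ X X - LinearMap.snd ℝ X X)).subset (subset_univ _) hxy).convex_le _
  · exact (((convexOn_infDist (hF.convex z)).comp_linearMap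
      (LinearMap.fst ℝ X X)).subset (subset_univ _) hxy).convex_le _
  · exact (((convexOn_infDist (hF.convex w)).comp_linearMap
      (LinearMap.snd ℝ X X)).subset (subset_univ _) hxy).convex_le _

include hF in
theorem isClosed_pairConstraint (x y : M) (i : Option (M ⊕ M)) :
    IsClosed (pairConstraint F r x y i) := by
  have hxy := (hF.isCompact x).isClosed.prod (hF.isCompact y).isClosed
  rcases i with _ | z | w
  · exact hxy.inter (isClosed_le (continuous_fst.sub continuous_snd).norm continuous_const)
  · exact hxy.inter (isClosed_le ((continuous_infDist_pt _).comp continuous_fst) continuous_const)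
  · exact hxy.inter (isClosed_le ((continuous_infDist_pt _).comp continuous_snd) continuous_const)

include hF hfin in
/-- A triple of constraints involving the coupling `none` mentions at most four points of `M`,
so the four-point condition solves it; otherwise `F₁ x × F₁ y` does. -/
theorem pairConstraint_inter_inter_nonempty (x y : M) (i j k : Option (M ⊕ M)) :
    (pairConstraint F r x y i ∩ pairConstraint F r x y j ∩ pairConstraint F r x y k).Nonempty := by
  classical
  let pt : Option (M ⊕ M) → M := fun i => i.elim x (Sum.elim id id)
  have hsel (u v : M) :
      ∃ e, ∀ i, pt i ∈ ({x, y, u, v} : Finset M) → e ∈ pairConstraint F r x y i := by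
    obtain ⟨f, hf⟩ := hfin {x, y, u, v} Finset.card_le_four
    have hxy : (f x, f y) ∈ F x ×ˢ F y := ⟨hf.1 x (by simp), hf.1 y (by simp)⟩
    refine ⟨(f x, f y), ?_⟩
    rintro (_ | z | w) hi
    · exact ⟨hxy, hf.2 x (by simp) y (by simp)⟩
    · exact ⟨hxy, hf.infDist_le (by simp) hi⟩
    · exact ⟨hxy, hf.infDist_le (by simp) hi⟩
  by_cases hnone : i = none ∨ j = none ∨ k = none
  · rcases hnone with rfl | rfl | rfl
    · obtain ⟨e, he⟩ := hsel (pt j) (pt k)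
      exact ⟨e, ⟨he none (by simp [pt]), he j (by simp)⟩, he k (by simp)⟩
    · obtain ⟨e, he⟩ := hsel (pt i) (pt k)
      exact ⟨e, ⟨he i (by simp), he none (by simp [pt])⟩, he k (by simp)⟩
    · obtain ⟨e, he⟩ := hsel (pt i) (pt j)
      exact ⟨e, ⟨he i (by simp), he j (by simp)⟩, he none (by simp [pt])⟩
  simp only [not_or] at hnone
  obtain ⟨p, hp⟩ := balancedRefinement_nonempty_of_fourPoint hF hfin x
  obtain ⟨q, hq⟩ := balancedRefinement_nonempty_of_fourPoint hF hfin y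
  have hpq : ∀ i ≠ none, (p, q) ∈ pairConstraint F r x y i := by
    rintro (_ | z | w) hi
    · exact absurd rfl hi
    · exact ⟨⟨hp.1, hq.1⟩, hp.2 z⟩
    · exact ⟨⟨hp.1, hq.1⟩, hq.2 w⟩
  exact ⟨(p, q), ⟨hpq i hnone.1, hpq j hnone.2.1⟩, hpq k hnone.2.2⟩

include hF hfin in
theorem exists_dist_le_of_fourPoint (x y : M) : ∃ p ∈ F₁ x, ∃ q ∈ F₁ y, dist p q ≤ r x y := by
  obtain ⟨a, b, hab⟩ := hF x
  obtain ⟨a', b', hab'⟩ := hF y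
  obtain ⟨⟨p, q⟩, hpq⟩ := nonempty_iInter_of_subset_segment_prod
    (convex_pairConstraint hF x y) (isClosed_pairConstraint hF x y)
    (fun i => (pairConstraint_subset x y i).trans (by rw [hab, hab']))
    (pairConstraint_inter_inter_nonempty hF hfin x y)
  have h := mem_iInter.1 hpq
  exact ⟨p, ⟨(h none).1.1, fun z => (h (some (.inl z))).2⟩,
    q, ⟨(h none).1.2, fun w => (h (some (.inr w))).2⟩, (dist_eq_norm p q).trans_le (h none).2⟩

include hF hsymm htri hfin in
theorem exists_infDist_le_three_mul (x y₁ y₂ : M) :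
    ∃ p ∈ F₁ x, infDist p (F₁ y₁) ≤ 3 * r x y₁ ∧ infDist p (F₁ y₂) ≤ 3 * r x y₂ := by
  wlog h : r x y₁ ≤ r x y₂ generalizing y₁ y₂
  · obtain ⟨p, hp, h₁, h₂⟩ := this y₂ y₁ (le_of_not_ge h)
    exact ⟨p, hp, h₂, h₁⟩
  have hconv := convex_balancedRefinement (r := r) hF.convex
  obtain ⟨p₁, hp₁, q₁, hq₁, h₁⟩ := exists_dist_le_of_fourPoint hF hfin x y₁
  obtain ⟨p₂, hp₂, q₂, hq₂, h₂⟩ := exists_dist_le_of_fourPoint hF hfin x y₂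
  obtain ⟨u₁, hu₁, u₂, hu₂, hu⟩ := exists_dist_le_of_fourPoint hF hfin y₁ y₂
  obtain ⟨p₃, hp₃, h₃⟩ :=
    (hF.isCompact x).exists_dist_le_of_infDist_le (hF.nonempty x) (hu₁.2 x)
  have hr := nonneg_of_fourPoint hfin x y₁
  have e₁₁ : infDist p₁ (F₁ y₁) ≤ r x y₁ := (infDist_le_dist_of_mem hq₁).trans h₁
  have e₂₂ : infDist p₂ (F₁ y₂) ≤ r x y₂ := (infDist_le_dist_of_mem hq₂).trans h₂
  have e₃₁ : infDist p₃ (F₁ y₁) ≤ r x y₁ :=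
    (infDist_le_dist_of_mem hu₁).trans (by rw [dist_comm, hsymm]; exact h₃)
  have e₃₂ : infDist p₃ (F₁ y₂) ≤ 2 * r x y₁ + r x y₂ := by
    refine (infDist_le_dist_of_mem hu₂).trans ?_
    linarith [dist_triangle p₃ u₁ u₂, dist_comm p₃ u₁, htri y₁ y₂ x, hsymm x y₁, hsymm y₁ x]
  obtain ⟨a, b, hab⟩ := hF x
  have hseg {p} (hp : p ∈ F₁ x) : p ∈ segment ℝ a b := hab ▸ hp.1
  -- `p₃ ∈ F x` lies next to `u₁`; whichever of `p₁`, `p₂`, `p₃` is between the other two works.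
  rcases wbtw_or_wbtw_or_wbtw_of_mem_segment (hab ▸ hp₃) (hseg hp₁) (hseg hp₂) with h' | h' | h'
  · exact ⟨p₁, hp₁, by linarith, (h'.infDist_le_max (hconv y₂)).trans (max_le (by linarith)
      (by linarith))⟩
  · exact ⟨p₂, hp₂, (h'.infDist_le_max (hconv y₁)).trans (max_le (by linarith) (by linarith)),
      by linarith⟩
  · exact ⟨p₃, (hconv x).segment_subset hp₂ hp₁ (mem_segment_iff_wbtw.2 h'), by linarith,
      by linarith⟩

include hF hsymm htri hfin in
theorem balancedRefinement_balancedRefinement_nonempty (x : M) : (F₂ x).Nonempty := by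
  obtain ⟨a, b, hab⟩ := hF x
  exact balancedRefinement_nonempty ((balancedRefinement_subset x).trans hab.subset)
    (isClosed_balancedRefinement (hF.isCompact x).isClosed)
    (convex_balancedRefinement hF.convex) (exists_infDist_le_three_mul hF hsymm htri hfin x)

include hF hsymm htri hfin in
theorem exists_dist_le_fifteen_mul_infDist_le {x : M} {p : X} (hp : p ∈ F₂ x) (y w : M) :
    ∃ q ∈ F₁ y, dist p q ≤ 15 * r x y ∧ infDist q (F₁ w) ≤ 3 * r y w := by
  have hcpt (z : M) : IsCompact (F₁ z) := isCompact_balancedRefinement (hF.isCompact z)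
  have hne := balancedRefinement_nonempty_of_fourPoint hF hfin
  have hconv := convex_balancedRefinement (r := r) hF.convex
  have hrxy := nonneg_of_fourPoint hfin x y
  have hryw := nonneg_of_fourPoint hfin y w
  obtain ⟨q₀, hq₀, hpq₀⟩ : ∃ q₀ ∈ F₁ y, dist p q₀ ≤ 3 * r x y :=
    (hcpt y).exists_dist_le_of_infDist_le (hne y) (hp.2 y)
  by_cases hg : infDist q₀ (F₁ w) ≤ 3 * r y w
  · exact ⟨q₀, hq₀, by linarith, hg⟩
  rw [not_le] at hg
  obtain ⟨v, hv, hpv⟩ : ∃ v ∈ F₁ w, dist p v ≤ 3 * r x w :=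
    (hcpt w).exists_dist_le_of_infDist_le (hne w) (hp.2 w)
  obtain ⟨w₀, hw₀, hvw₀⟩ :=
    (hF.isCompact y).exists_dist_le_of_infDist_le (hF.nonempty y) (hv.2 y)
  obtain ⟨β, hβ, β', hβ', hββ'⟩ := exists_dist_le_of_fourPoint hF hfin y w
  have hgw₀ : infDist w₀ (F₁ w) ≤ r y w :=
    (infDist_le_dist_of_mem hv).trans (by rw [dist_comm, hsymm]; exact hvw₀)
  have hgβ : infDist β (F₁ w) ≤ r y w := (infDist_le_dist_of_mem hβ').trans hββ'
  have hgq₀ : infDist q₀ (F₁ w) ≤ 6 * r x y + 3 * r y w := by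
    have := infDist_le_infDist_add_dist (x := q₀) (y := p) (s := F₁ w)
    have := infDist_le_dist_of_mem (x := p) hv
    linarith [dist_comm p q₀, htri x w y]
  -- Walk from `q₀` towards `w₀` until the distance to `F₁ w` drops to `3 r y w`.
  obtain ⟨t, hq₀tw₀, ht, htq₀⟩ := exists_wbtw_infDist_le (hconv w) hgw₀ (by linarith) hg
  -- The fraction of `[q₀, w₀]` walked is at most `6 r x y / (6 r x y + 2 r y w)`.
  have hdt : dist t q₀ ≤ 12 * r x y := by
    have : dist w₀ q₀ ≤ 6 * r x y + 4 * r y w := by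
      linarith [dist_triangle4 w₀ v p q₀, dist_comm w₀ v, dist_comm p v, htri x w y, hsymm w y]
    nlinarith [dist_nonneg (x := t) (y := q₀)]
  obtain ⟨a, b, hab⟩ := hF y
  obtain ⟨q, hq, hqq₀, hqw⟩ := exists_mem_dist_le_of_wbtw (hconv y) (hconv w)
    ((balancedRefinement_subset y).trans hab.subset) hq₀ hβ
    (hab ▸ (hF.convex y).segment_subset hq₀.1 hw₀ (mem_segment_iff_wbtw.2 hq₀tw₀)) hq₀tw₀
    (by linarith) (by linarith) (by linarith)
  refine ⟨q, hq, ?_, hqw.trans (max_le (by linarith) ht)⟩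
  linarith [dist_triangle p q₀ q, dist_comm q q₀]

include hF hsymm htri hfin in
theorem exists_mem_dist_le_fifteen_mul {x : M} {p : X} (hp : p ∈ F₂ x) (y : M) :
    ∃ q ∈ F₂ y, dist p q ≤ 15 * r x y := by
  obtain ⟨a, b, hab⟩ := hF y
  obtain ⟨q, hq, hpq⟩ := balancedRefinement_inter_nonempty (r := fun x y => 3 * r x y)
    ((balancedRefinement_subset y).trans hab.subset)
    (isClosed_balancedRefinement (hF.isCompact y).isClosed)
    (convex_balancedRefinement hF.convex) (convex_closedBall p (15 * r x y)) isClosed_closedBall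
    (fun w =>
      let ⟨q, hq, hpq, hqw⟩ := exists_dist_le_fifteen_mul_infDist_le hF hsymm htri hfin hp y w
      ⟨q, ⟨hq, by rwa [mem_closedBall, dist_comm]⟩, hqw⟩)
    (exists_infDist_le_three_mul hF hsymm htri hfin y)
  exact ⟨q, hq, by rwa [mem_closedBall, dist_comm] at hpq⟩

include hF hsymm htri hfin in
theorem exists_lipschitz_selection_of_fourPoint :
    ∃ f : M → X, (∀ x, f x ∈ F x) ∧ ∀ x y, ‖f x - f y‖ ≤ 15 * r x y := by
  have hF₂ : IsSegmentValued F₂ := fun x =>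
    let ⟨a, b, hab⟩ := hF x
    exists_eq_segment_of_subset_segment
      (balancedRefinement_balancedRefinement_nonempty hF hsymm htri hfin x)
      (convex_balancedRefinement (convex_balancedRefinement hF.convex) x)
      (isClosed_balancedRefinement (isClosed_balancedRefinement (hF.isCompact x).isClosed))
      (((balancedRefinement_subset x).trans (balancedRefinement_subset x)).trans hab.subset)
  choose a b hab using hF₂
  refine ⟨fun x => midpoint ℝ (a x) (b x), fun x => ?_, fun x y => ?_⟩
  · exact balancedRefinement_subset x (balancedRefinement_subset x
      (hab x ▸ midpoint_mem_segment (a x) (b x)))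
  · rw [← dist_eq_norm]
    refine dist_midpoint_midpoint_le_of_segment (fun p hp => ?_) (fun q hq => ?_)
    · exact hab y ▸ exists_mem_dist_le_fifteen_mul hF hsymm htri hfin (hab x ▸ hp) y
    · obtain ⟨p, hp, hqp⟩ := exists_mem_dist_le_fifteen_mul hF hsymm htri hfin (hab y ▸ hq) x
      exact ⟨p, hab x ▸ hp, by rw [dist_comm, hsymm]; exact hqp⟩

end FinitenessPrinciple

end LipschitzSelection

theorem stmt_19_general {M : Type*} {X : Type*} [NormedAddCommGroup X] [NormedSpace ℝ X]
    (ρ : M → M → ℝ)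
    (hρsymm : ∀ x y, ρ x y = ρ y x)
    (hρtri : ∀ x y z, ρ x y ≤ ρ x z + ρ z y)
    (F : M → Set X) (hF : ∀ x, ∃ a b : X, F x = segment ℝ a b)
    (lam : ℝ) (hlam : 0 < lam)
    (hfin : ∀ M' : Finset M, M'.card ≤ 4 →
      ∃ f' : M → X, (∀ x ∈ M', f' x ∈ F x) ∧
        ∀ x ∈ M', ∀ y ∈ M', ‖f' x - f' y‖ ≤ lam * ρ x y) :
    ∃ f : M → X, (∀ x, f x ∈ F x) ∧ ∀ x y, ‖f x - f y‖ ≤ 15 * lam * ρ x y := by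
  obtain ⟨f, hf, hlip⟩ := LipschitzSelection.exists_lipschitz_selection_of_fourPoint
    (r := fun x y => lam * ρ x y) hF (fun x y => by rw [hρsymm])
    (fun x y z => by rw [← mul_add]; exact mul_le_mul_of_nonneg_left (hρtri x y z) hlam.le) hfin
  exact ⟨f, hf, fun x y => (hlip x y).trans_eq (mul_assoc _ _ _).symm⟩

/-- **Theorem (LSEG-B), a finiteness principle for segment-valued mappings**: let `(M,ρ)` be
a pseudometric space, `X` a Banach space, and `F : M → 𝒦₁(X)` a map into nonempty closed
bounded segments (possibly points) of `X`. If for every subset `M' ⊆ M` with at most `4`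
points the restriction `F|_{M'}` has a selection which is `λ`-Lipschitz with respect to `ρ`,
then `F` has a selection which is `15λ`-Lipschitz on all of `M`. -/
theorem stmt_19 {M : Type*} {X : Type*} [NormedAddCommGroup X] [NormedSpace ℝ X]
    [CompleteSpace X]
    (ρ : M → M → ℝ)
    (hρself : ∀ x, ρ x x = 0) (hρsymm : ∀ x y, ρ x y = ρ y x)
    (hρtri : ∀ x y z, ρ x y ≤ ρ x z + ρ z y)
    (F : M → Set X) (hF : ∀ x, ∃ a b : X, F x = segment ℝ a b)
    (lam : ℝ) (hlam : 0 < lam)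
    (hfin : ∀ M' : Finset M, M'.card ≤ 4 →
      ∃ f' : M → X, (∀ x ∈ M', f' x ∈ F x) ∧
        ∀ x ∈ M', ∀ y ∈ M', ‖f' x - f' y‖ ≤ lam * ρ x y) :
    ∃ f : M → X, (∀ x, f x ∈ F x) ∧ ∀ x y, ‖f x - f y‖ ≤ 15 * lam * ρ x y :=
  stmt_19_general ρ hρsymm hρtri F hF lam hlam hfin
end
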